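/- arXiv:1604.07791 — 7 statements merged into one kernel-verified Lean document; each statement's English description precedes it below -/
import Mathlib

section
/- Let k ∈ ℕ, let p be a prime, and let a ∈ ℤ with p ∤ a. Assume (a|p)_{2^{k-1}} = 1. Then (a|p)_{2^k} ≡ a^{(p-1)/gcd(2^k, p-1)} (mod p). -/
/-- Generalized power criterion in a finite cyclic group. -/
lemma cyclic_pow_iff {G : Type*} [Group G] [Fintype G] [IsCyclic G] (n : ℕ) (u : G) :
    (∃ x : G, x ^ n = u) ↔ u ^ (Fintype.card G / Nat.gcd n (Fintype.card G)) = 1 := by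
  obtain ⟨g, hg⟩ := IsCyclic.exists_generator (α := G)
  have hord : orderOf g = Fintype.card G := by
    rw [orderOf_eq_card_of_forall_mem_zpowers hg, Nat.card_eq_fintype_card]
  have hN : 0 < Fintype.card G := Fintype.card_pos
  have hbez0 := Nat.gcd_eq_gcd_ab n (Fintype.card G)
  have hgmem : ∀ x : G, ∃ j : ℕ, g ^ j = x := fun x =>
    (Submonoid.mem_powers_iff x g).mp
      ((IsOfFinOrder.mem_powers_iff_mem_zpowers (isOfFinOrder_of_finite g)).mpr (hg x))
  obtain ⟨N, hNeq⟩ : ∃ N, Fintype.card G = N := ⟨_, rfl⟩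
  rw [hNeq] at hord hN hbez0 ⊢
  obtain ⟨d, hdeq⟩ : ∃ d, Nat.gcd n N = d := ⟨_, rfl⟩
  rw [hdeq] at hbez0 ⊢
  have hdn : d ∣ n := hdeq ▸ Nat.gcd_dvd_left n N
  have hdN : d ∣ N := hdeq ▸ Nat.gcd_dvd_right n N
  have hd0 : 0 < d := hdeq ▸ Nat.gcd_pos_of_pos_right n hN
  have hgN : g ^ N = 1 := by rw [← hord]; exact pow_orderOf_eq_one g
  obtain ⟨n', hn'⟩ := hdn
  obtain ⟨N', hN'⟩ := hdN
  have hN'0 : 0 < N' := by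
    rcases Nat.eq_zero_or_pos N' with h0 | h0
    · rw [h0, mul_zero] at hN'; omega
    · exact h0
  have hNd : N / d = N' := by rw [hN']; exact Nat.mul_div_cancel_left _ hd0
  constructor
  · rintro ⟨x, rfl⟩
    obtain ⟨j, rfl⟩ := hgmem x
    rw [← pow_mul, ← pow_mul, hNd]
    have key : j * (n * N') = N * (j * n') := by rw [hn', hN']; ring
    rw [key, pow_mul, hgN, one_pow]
  · intro hu
    obtain ⟨m, rfl⟩ := hgmem u
    rw [hNd] at hu
    have h1 : N ∣ m * N' := by
      have := orderOf_dvd_of_pow_eq_one (show g ^ (m * N') = 1 by rw [pow_mul]; exact hu)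
      rwa [hord] at this
    have h2 : d ∣ m := by
      have h3 : d * N' ∣ m * N' := hN' ▸ h1
      exact (Nat.mul_dvd_mul_iff_right hN'0).mp h3
    obtain ⟨c, hc⟩ := h2
    refine ⟨g ^ (Nat.gcdA n N * (c : ℤ)), ?_⟩
    calc (g ^ (Nat.gcdA n N * (c : ℤ))) ^ n
        = g ^ ((d : ℤ) * c + (N : ℤ) * (-(Nat.gcdB n N) * c)) := by
          rw [← zpow_natCast (g ^ (Nat.gcdA n N * (c : ℤ))) n, ← zpow_mul]
          congr 1
          rw [hbez0]
          ring
      _ = (g ^ ((d : ℤ) * c)) * (g ^ (N : ℤ)) ^ (-(Nat.gcdB n N) * c) := by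
          simp only [zpow_add, zpow_mul]
      _ = g ^ m := by
          rw [zpow_natCast, hgN, one_zpow, mul_one, ← Nat.cast_mul, zpow_natCast, ← hc]

/- The rational `2^k`-th power residue symbol `(a|p)_{2^k}` for a prime `p`:
`1` if `a` is a `2^k`-th power residue mod `p`, `-1` otherwise. -/
open Classical in
noncomputable def rps (k p : ℕ) (a : ℤ) : ℤ :=
  if ∃ x : ℤ, x ^ (2 ^ k) ≡ a [ZMOD (p : ℤ)] then 1 else -1

theorem statement0 (k p : ℕ) (hk : 1 ≤ k) (hp : p.Prime) (a : ℤ)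
    (hpa : ¬ (p : ℤ) ∣ a) (h : rps (k - 1) p a = 1) :
    rps k p a ≡ a ^ ((p - 1) / Nat.gcd (2 ^ k) (p - 1)) [ZMOD (p : ℤ)] := by
  haveI : Fact p.Prime := ⟨hp⟩
  have hA0 : (a : ZMod p) ≠ 0 := fun h0 => hpa ((ZMod.intCast_zmod_eq_zero_iff_dvd a p).mp h0)
  set Au : (ZMod p)ˣ := Units.mk0 (a : ZMod p) hA0 with hAu
  have hAuc : (Au : ZMod p) = (a : ZMod p) := rfl
  -- the criterion
  have crit : ∀ n : ℕ, 0 < n → ((∃ x : ℤ, x ^ n ≡ a [ZMOD (p : ℤ)]) ↔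
      Au ^ ((p - 1) / Nat.gcd n (p - 1)) = 1) := by
    intro n hn
    rw [← ZMod.card_units p, ← cyclic_pow_iff n Au]
    constructor
    · rintro ⟨x, hx⟩
      have hx' : ((x : ZMod p)) ^ n = (a : ZMod p) := by
        have := (ZMod.intCast_eq_intCast_iff (x ^ n) a p).mpr hx
        push_cast at this
        exact this
      have hx0 : (x : ZMod p) ≠ 0 := fun h0 => hA0 (by rw [← hx', h0, zero_pow hn.ne'])
      refine ⟨Units.mk0 _ hx0, ?_⟩
      rw [Units.ext_iff, Units.val_pow_eq_pow_val]
      exact hx'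
    · rintro ⟨u, hu⟩
      obtain ⟨x, hx⟩ := ZMod.intCast_surjective (u : ZMod p)
      refine ⟨x, (ZMod.intCast_eq_intCast_iff (x ^ n) a p).mp ?_⟩
      push_cast
      rw [hx, ← Units.val_pow_eq_pow_val, hu]
      exact hAuc
  have hN0 : 0 < p - 1 := by have := hp.two_le; omega
  -- hypothesis gives residue at level k-1
  have hres : ∃ x : ℤ, x ^ (2 ^ (k - 1)) ≡ a [ZMOD (p : ℤ)] := by
    by_contra hcon
    unfold rps at h
    rw [if_neg hcon] at h
    norm_num at h
  have hA1 : Au ^ ((p - 1) / Nat.gcd (2 ^ (k - 1)) (p - 1)) = 1 :=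
    (crit _ (by positivity)).mp hres
  by_cases hdvd : (2 : ℕ) ^ k ∣ p - 1
  · -- hard case: 2^k divides p - 1
    have hg1 : Nat.gcd (2 ^ k) (p - 1) = 2 ^ k := Nat.gcd_eq_left hdvd
    have hg2 : Nat.gcd (2 ^ (k - 1)) (p - 1) = 2 ^ (k - 1) :=
      Nat.gcd_eq_left (dvd_trans (pow_dvd_pow 2 (Nat.sub_le k 1)) hdvd)
    have h2k : (2 : ℕ) ^ k = 2 ^ (k - 1) * 2 := by
      rw [← pow_succ]; congr 1; omega
    have hdouble : (p - 1) / 2 ^ (k - 1) = 2 * ((p - 1) / 2 ^ k) := by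
      obtain ⟨c, hc⟩ := hdvd
      have hnum : p - 1 = 2 ^ (k - 1) * (2 * c) := by rw [hc, h2k]; ring
      rw [hnum, Nat.mul_div_cancel_left _ (by positivity)]
      rw [show (2 : ℕ) ^ (k - 1) * (2 * c) = 2 ^ k * c by rw [h2k]; ring,
        Nat.mul_div_cancel_left _ (by positivity)]
    have hsq : (Au ^ ((p - 1) / 2 ^ k)) * (Au ^ ((p - 1) / 2 ^ k)) = 1 := by
      rw [← pow_add, ← two_mul, ← hdouble, ← hg2]
      exact hA1
    rw [hg1, ← ZMod.intCast_eq_intCast_iff]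
    by_cases hc : ∃ x : ℤ, x ^ (2 ^ k) ≡ a [ZMOD (p : ℤ)]
    · have h1 : Au ^ ((p - 1) / 2 ^ k) = 1 := by
        have := (crit (2 ^ k) (by positivity)).mp hc; rwa [hg1] at this
      unfold rps
      rw [if_pos hc]
      push_cast
      have h1' := congrArg (Units.val) h1
      push_cast at h1'
      exact h1'.symm
    · have h1 : Au ^ ((p - 1) / 2 ^ k) ≠ 1 := by
        intro h1
        exact hc ((crit (2 ^ k) (by positivity)).mpr (by rwa [hg1]))
      have h2 : ((Au : ZMod p)) ^ ((p - 1) / 2 ^ k) = -1 := by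
        have hsq' := congrArg (Units.val) hsq
        push_cast at hsq'
        rcases mul_self_eq_one_iff.mp hsq' with h' | h'
        · exact absurd (Units.ext (by push_cast; exact h')) h1
        · exact h'
      unfold rps
      rw [if_neg hc]
      push_cast
      exact h2.symm
  · -- easy case: gcds agree, symbol is 1
    have hgeq : Nat.gcd (2 ^ k) (p - 1) = Nat.gcd (2 ^ (k - 1)) (p - 1) := by
      apply Nat.dvd_antisymm
      · obtain ⟨j, hjk, hj⟩ := (Nat.dvd_prime_pow Nat.prime_two).mp
          (Nat.gcd_dvd_left (2 ^ k) (p - 1))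
        have hjk' : j ≤ k - 1 := by
          rcases Nat.lt_or_ge j k with h' | h'
          · omega
          · exfalso
            apply hdvd
            have hjeq : j = k := le_antisymm hjk h'
            rw [← hjeq, ← hj]
            exact Nat.gcd_dvd_right _ _
        exact Nat.dvd_gcd (hj ▸ pow_dvd_pow 2 hjk') (Nat.gcd_dvd_right _ _)
      · exact Nat.dvd_gcd (dvd_trans (Nat.gcd_dvd_left _ _) (pow_dvd_pow 2 (Nat.sub_le k 1)))
          (Nat.gcd_dvd_right _ _)
    have h1 : Au ^ ((p - 1) / Nat.gcd (2 ^ k) (p - 1)) = 1 := by rw [hgeq]; exact hA1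
    have hc : ∃ x : ℤ, x ^ (2 ^ k) ≡ a [ZMOD (p : ℤ)] := (crit _ (by positivity)).mpr h1
    rw [← ZMod.intCast_eq_intCast_iff]
    unfold rps
    rw [if_pos hc]
    push_cast
    have h1' := congrArg (Units.val) h1
    push_cast at h1'
    exact h1'.symm
end

section
/- Let n ∈ ℕ, a, b ∈ ℤ with gcd(n, ab) = 1, and k ∈ ℕ. If (a|p)_{2^{k-1}} = (b|p)_{2^{k-1}} = 1 for every prime factor p of n, then (ab|n)_{2^k} = (a|n)_{2^k} · (b|n)_{2^k}. -/
/- The rational `2^k`-th power residue symbol `(a|n)_{2^k}` for composite `n`. -/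
noncomputable def rpsN (k n : ℕ) (a : ℤ) : ℤ :=
  (n.primeFactorsList.map fun p => rps k p a).prod

/-- In a finite cyclic group, `g` is an `m`-th power iff `g ^ (N / gcd m N) = 1`. -/
lemma pow_crit {G : Type*} [Group G] [Fintype G] [IsCyclic G] {m : ℕ} (hm : 0 < m) (g : G) :
    (∃ w : G, w ^ m = g) ↔ g ^ (Fintype.card G / Nat.gcd m (Fintype.card G)) = 1 := by
  set N := Fintype.card G with hNdef
  set d := Nat.gcd m N with hddef
  have hd : 0 < d := Nat.gcd_pos_of_pos_left _ hm
  obtain ⟨e, he⟩ : d ∣ m := Nat.gcd_dvd_left m N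
  obtain ⟨f, hf⟩ : d ∣ N := Nat.gcd_dvd_right m N
  have hNd : N / d = f := by rw [hf, Nat.mul_div_cancel_left _ hd]
  constructor
  · rintro ⟨w, rfl⟩
    rw [← pow_mul, hNd, he]
    have h3 : d * e * f = e * N := by rw [hf]; ring
    rw [h3, pow_mul, pow_card_eq_one]
  · intro hg
    obtain ⟨z, hz⟩ := IsCyclic.exists_monoid_generator (α := G)
    obtain ⟨i, rfl⟩ := hz g
    have hoz : orderOf z = N := (orderOf_eq_card_of_forall_mem_zpowers
      (fun x => mem_powers_iff_mem_zpowers.1 (hz x))).trans Nat.card_eq_fintype_card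
    have h1 : z ^ (i * (N / d)) = 1 := by rw [pow_mul]; exact hg
    have h2 : N ∣ i * (N / d) := by
      have := orderOf_dvd_of_pow_eq_one h1
      rwa [hoz] at this
    have hfpos : 0 < f := by
      have hN : 0 < N := Fintype.card_pos
      rcases Nat.eq_zero_or_pos f with h0 | h0
      · rw [h0, mul_zero] at hf; omega
      · exact h0
    have hdi : d ∣ i := by
      rw [hNd, hf] at h2
      exact (Nat.mul_dvd_mul_iff_right hfpos).1 h2
    obtain ⟨j, rfl⟩ := hdi
    refine ⟨z ^ ((Nat.gcdA m N) * j), ?_⟩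
    have hbez : (d : ℤ) = m * Nat.gcdA m N + N * Nat.gcdB m N := by
      have hh := Int.gcd_eq_gcd_ab (m : ℤ) (N : ℤ)
      simpa [hddef] using Nat.gcd_eq_gcd_ab m N
    have hzN : z ^ (N : ℤ) = 1 := by rw [zpow_natCast, pow_card_eq_one]
    calc (z ^ ((Nat.gcdA m N) * j)) ^ m = z ^ ((Nat.gcdA m N) * j * m) := by
          rw [← zpow_natCast (z ^ (Nat.gcdA m N * j)), ← zpow_mul]
      _ = z ^ ((d : ℤ) * j) * ((z ^ ((N : ℤ))) ^ (-(Nat.gcdB m N * j))) := by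
          rw [← zpow_mul, ← zpow_add]
          congr 1
          rw [hbez]; ring
      _ = z ^ ((d : ℤ) * j) := by rw [hzN, one_zpow, mul_one]
      _ = z ^ (d * j) := by rw [← zpow_natCast z (d * j)]; push_cast; ring_nf

/-- In a cyclic group there is at most one element of order two. -/
lemma order_two_unique {G : Type*} [Group G] [Fintype G] [IsCyclic G] {x y : G}
    (hx : x ^ 2 = 1) (hy : y ^ 2 = 1) (hx1 : x ≠ 1) (hy1 : y ≠ 1) : x = y := by
  classical
  by_contra hne
  have hcard := IsCyclic.card_pow_eq_one_le (α := G) (n := 2) (by norm_num)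
  have hsub : ({x, y, 1} : Finset G) ⊆ ({a : G | a ^ 2 = 1} : Finset G) := by
    intro t ht
    simp only [Finset.mem_insert, Finset.mem_singleton] at ht
    rcases ht with rfl | rfl | rfl <;> simp [hx, hy, Finset.mem_filter]
  have h3 : ({x, y, 1} : Finset G).card = 3 := by
    rw [Finset.card_insert_of_notMem (by simp [hne, hx1]),
      Finset.card_insert_of_notMem (by simp [hy1]), Finset.card_singleton]
  have := Finset.card_le_card hsub
  omega

/-- Key multiplicativity in a finite cyclic group. -/
lemma key_cyclic {G : Type*} [CommGroup G] [Fintype G] [IsCyclic G] (k : ℕ) (hk : 1 ≤ k)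
    {a b : G} (ha : ∃ u : G, u ^ (2 ^ (k - 1)) = a) (hb : ∃ v : G, v ^ (2 ^ (k - 1)) = b) :
    ((∃ w : G, w ^ (2 ^ k) = a * b) ↔ ((∃ w : G, w ^ (2 ^ k) = a) ↔ (∃ w : G, w ^ (2 ^ k) = b))) := by
  obtain ⟨u, rfl⟩ := ha
  obtain ⟨v, rfl⟩ := hb
  have hm : 0 < 2 ^ k := pow_pos (by norm_num : (0:ℕ) < 2) k
  set N := Fintype.card G with hNdef
  set d := Nat.gcd (2 ^ k) N with hddef
  rw [pow_crit hm, pow_crit hm, pow_crit hm]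
  have hexp : ∀ g : G, (g ^ (2 ^ (k - 1))) ^ (N / d) = g ^ (2 ^ (k - 1) * (N / d)) := by
    intro g; rw [pow_mul]
  set χu := u ^ (2 ^ (k - 1) * (N / d)) with hχu
  set χv := v ^ (2 ^ (k - 1) * (N / d)) with hχv
  have hsq : ∀ g : G, (g ^ (2 ^ (k - 1) * (N / d))) ^ 2 = 1 := by
    intro g
    obtain ⟨e, he⟩ : d ∣ 2 ^ k := Nat.gcd_dvd_left _ _
    obtain ⟨f, hf⟩ : d ∣ N := Nat.gcd_dvd_right _ _
    have hd : 0 < d := Nat.gcd_pos_of_pos_left _ hm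
    have hNd : N / d = f := by rw [hf, Nat.mul_div_cancel_left _ hd]
    have h2k : 2 ^ (k - 1) * 2 = 2 ^ k := by
      rw [← pow_succ, Nat.sub_add_cancel hk]
    have : 2 ^ (k - 1) * (N / d) * 2 = e * N := by
      rw [hNd, hf]
      calc 2 ^ (k - 1) * f * 2 = (2 ^ (k - 1) * 2) * f := by ring
        _ = 2 ^ k * f := by rw [h2k]
        _ = d * e * f := by rw [he]
        _ = e * (d * f) := by ring
    rw [← pow_mul, this, pow_mul, pow_card_eq_one]
  have hμ : u ^ (2 ^ (k - 1)) * v ^ (2 ^ (k - 1)) = (u * v) ^ (2 ^ (k - 1)) := (mul_pow u v _).symm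
  rw [hμ, hexp, hexp, hexp, mul_pow, ← hχu, ← hχv]
  have hu2 := hsq u
  have hv2 := hsq v
  rw [← hχu] at hu2
  rw [← hχv] at hv2
  constructor
  · intro hprod
    have : χv = χu⁻¹ := by
      rw [eq_inv_iff_mul_eq_one, mul_comm]; exact hprod
    have hvu : χv = χu := by
      rw [this, inv_eq_iff_mul_eq_one, ← pow_two]
      exact hu2
    rw [hvu]
  · intro hiff
    by_cases h1 : χu = 1
    · have h2 : χv = 1 := hiff.1 h1
      rw [h1, h2, mul_one]
    · have h2 : χv ≠ 1 := fun hc => h1 (hiff.2 hc)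
      have : χu = χv := order_two_unique hu2 hv2 h1 h2
      rw [this, ← pow_two]
      exact hv2

/-- Bridge from integer congruence to units of `ZMod p`. -/
lemma int_to_units (p : ℕ) [Fact p.Prime] (m : ℕ) (hm : 0 < m) (a : ℤ) (hpa : ¬ ((p : ℤ) ∣ a)) :
    (∃ x : ℤ, x ^ m ≡ a [ZMOD (p : ℤ)]) ↔
      ∃ w : (ZMod p)ˣ, (w : ZMod p) ^ m = (a : ZMod p) := by
  have hA : (a : ZMod p) ≠ 0 := by
    rw [Ne, ZMod.intCast_zmod_eq_zero_iff_dvd]; exact hpa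
  constructor
  · rintro ⟨x, hx⟩
    have hx' : ((x : ZMod p)) ^ m = (a : ZMod p) := by
      have := (ZMod.intCast_eq_intCast_iff (x ^ m) a p).2 hx
      push_cast at this
      exact this
    have hx0 : (x : ZMod p) ≠ 0 := by
      intro h0
      rw [h0, zero_pow (Nat.pos_iff_ne_zero.1 hm)] at hx'
      exact hA hx'.symm
    exact ⟨Units.mk0 _ hx0, hx'⟩
  · rintro ⟨w, hw⟩
    refine ⟨((w : ZMod p).val : ℤ), ?_⟩
    rw [← ZMod.intCast_eq_intCast_iff]
    push_cast
    rw [ZMod.natCast_val, ZMod.cast_id]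
    exact hw

/-- Prime-level multiplicativity. -/
lemma rps_mul (p : ℕ) (hp : p.Prime) (k : ℕ) (hk : 1 ≤ k) (a b : ℤ)
    (hpa : ¬ ((p : ℤ) ∣ a)) (hpb : ¬ ((p : ℤ) ∣ b))
    (ha : rps (k - 1) p a = 1) (hb : rps (k - 1) p b = 1) :
    rps k p (a * b) = rps k p a * rps k p b := by
  haveI : Fact p.Prime := ⟨hp⟩
  have hpab : ¬ ((p : ℤ) ∣ a * b) := by
    intro hd
    rcases Int.Prime.dvd_mul' hp hd with hc | hc
    · exact hpa hc
    · exact hpb hc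
  have hm : 0 < 2 ^ (k - 1) := pow_pos (by norm_num : (0:ℕ) < 2) _
  -- extract existence from ha, hb
  have ha' : ∃ x : ℤ, x ^ (2 ^ (k - 1)) ≡ a [ZMOD (p : ℤ)] := by
    by_contra hc
    rw [rps, if_neg hc] at ha
    norm_num at ha
  have hb' : ∃ x : ℤ, x ^ (2 ^ (k - 1)) ≡ b [ZMOD (p : ℤ)] := by
    by_contra hc
    rw [rps, if_neg hc] at hb
    norm_num at hb
  obtain ⟨u, hu⟩ := (int_to_units p (2 ^ (k - 1)) hm a hpa).1 ha'
  obtain ⟨v, hv⟩ := (int_to_units p (2 ^ (k - 1)) hm b hpb).1 hb'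
  -- unit versions
  have hA : (a : ZMod p) ≠ 0 := by rw [Ne, ZMod.intCast_zmod_eq_zero_iff_dvd]; exact hpa
  have hB : (b : ZMod p) ≠ 0 := by rw [Ne, ZMod.intCast_zmod_eq_zero_iff_dvd]; exact hpb
  set au : (ZMod p)ˣ := Units.mk0 _ hA with hau
  set bu : (ZMod p)ˣ := Units.mk0 _ hB with hbu
  have huu : u ^ (2 ^ (k - 1)) = au := by
    apply Units.ext
    rw [Units.val_pow_eq_pow_val]
    exact hu
  have hvv : v ^ (2 ^ (k - 1)) = bu := by
    apply Units.ext
    rw [Units.val_pow_eq_pow_val]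
    exact hv
  have hmain := key_cyclic (G := (ZMod p)ˣ) k hk ⟨u, huu⟩ ⟨v, hvv⟩
  have hAiff : (∃ x : ℤ, x ^ (2 ^ k) ≡ a [ZMOD (p : ℤ)]) ↔ ∃ w : (ZMod p)ˣ, w ^ (2 ^ k) = au := by
    rw [int_to_units p _ (pow_pos (by norm_num : (0:ℕ) < 2) _) a hpa]
    constructor
    · rintro ⟨w, hw⟩
      exact ⟨w, Units.ext (by rw [Units.val_pow_eq_pow_val]; exact hw)⟩
    · rintro ⟨w, hw⟩
      refine ⟨w, ?_⟩
      rw [← Units.val_pow_eq_pow_val, hw]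
      simp [hau]
  have hBiff : (∃ x : ℤ, x ^ (2 ^ k) ≡ b [ZMOD (p : ℤ)]) ↔ ∃ w : (ZMod p)ˣ, w ^ (2 ^ k) = bu := by
    rw [int_to_units p _ (pow_pos (by norm_num : (0:ℕ) < 2) _) b hpb]
    constructor
    · rintro ⟨w, hw⟩
      exact ⟨w, Units.ext (by rw [Units.val_pow_eq_pow_val]; exact hw)⟩
    · rintro ⟨w, hw⟩
      refine ⟨w, ?_⟩
      rw [← Units.val_pow_eq_pow_val, hw]
      simp [hbu]
  have hCiff : (∃ x : ℤ, x ^ (2 ^ k) ≡ a * b [ZMOD (p : ℤ)]) ↔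
      ∃ w : (ZMod p)ˣ, w ^ (2 ^ k) = au * bu := by
    rw [int_to_units p _ (pow_pos (by norm_num : (0:ℕ) < 2) _) (a * b) hpab]
    have hval : ((au * bu : (ZMod p)ˣ) : ZMod p) = ((a * b : ℤ) : ZMod p) := by
      rw [Units.val_mul, hau, hbu, Units.val_mk0, Units.val_mk0]
      push_cast
      ring
    constructor
    · rintro ⟨w, hw⟩
      exact ⟨w, Units.ext (by rw [Units.val_pow_eq_pow_val, hval]; exact hw)⟩
    · rintro ⟨w, hw⟩
      refine ⟨w, ?_⟩
      rw [← Units.val_pow_eq_pow_val, hw, hval]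
  have hfinal : (∃ x : ℤ, x ^ (2 ^ k) ≡ a * b [ZMOD (p : ℤ)]) ↔
      ((∃ x : ℤ, x ^ (2 ^ k) ≡ a [ZMOD (p : ℤ)]) ↔ (∃ x : ℤ, x ^ (2 ^ k) ≡ b [ZMOD (p : ℤ)])) := by
    rw [hAiff, hBiff, hCiff]; exact hmain
  unfold rps
  by_cases h1 : ∃ x : ℤ, x ^ (2 ^ k) ≡ a [ZMOD (p : ℤ)] <;>
    by_cases h2 : ∃ x : ℤ, x ^ (2 ^ k) ≡ b [ZMOD (p : ℤ)]
  · rw [if_pos h1, if_pos h2, if_pos (hfinal.2 (iff_of_true h1 h2))]; norm_num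
  · rw [if_pos h1, if_neg h2, if_neg (fun hc => h2 ((hfinal.1 hc).1 h1))]; norm_num
  · rw [if_neg h1, if_pos h2, if_neg (fun hc => h1 ((hfinal.1 hc).2 h2))]; norm_num
  · rw [if_neg h1, if_neg h2, if_pos (hfinal.2 (iff_of_false h1 h2))]; norm_num

theorem statement2 (n : ℕ) (a b : ℤ) (h : Int.gcd (n : ℤ) (a * b) = 1)
    (k : ℕ) (hk : 1 ≤ k)
    (ha : ∀ p ∈ n.primeFactors, rps (k - 1) p a = 1)
    (hb : ∀ p ∈ n.primeFactors, rps (k - 1) p b = 1) :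
    rpsN k n (a * b) = rpsN k n a * rpsN k n b := by
  unfold rpsN
  have hmap : n.primeFactorsList.map (fun p => rps k p (a * b)) =
      n.primeFactorsList.map (fun p => rps k p a * rps k p b) := by
    apply List.map_congr_left
    intro p hp
    have hprime : p.Prime := Nat.prime_of_mem_primeFactorsList hp
    have hdvd : p ∣ n := Nat.dvd_of_mem_primeFactorsList hp
    have hn0 : n ≠ 0 := by
      intro h0
      rw [h0] at hp
      simp [Nat.primeFactorsList] at hp
    have hmem : p ∈ n.primeFactors := Nat.mem_primeFactors.2 ⟨hprime, hdvd, hn0⟩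
    have hpab : ¬ ((p : ℤ) ∣ a * b) := by
      intro hdab
      have h1 : (p : ℤ) ∣ (Int.gcd (n : ℤ) (a * b) : ℤ) :=
        Int.dvd_coe_gcd (by exact_mod_cast Int.natCast_dvd_natCast.2 hdvd) hdab
      rw [h] at h1
      have := Int.le_of_dvd (by norm_num) h1
      have := hprime.two_le
      omega
    have hpa : ¬ ((p : ℤ) ∣ a) := fun hc => hpab (hc.mul_right b)
    have hpb : ¬ ((p : ℤ) ∣ b) := fun hc => hpab (hc.mul_left a)
    exact rps_mul p hprime k hk a b hpa hpb (ha p hmem) (hb p hmem)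
  rw [hmap]
  exact List.prod_map_mul
end

section
/- Let k ∈ ℕ, let p be a prime, and let a ∈ ℤ with p ∤ a. Then (a^{2^{k-1}}|p)_{2^k} = (a|p)_2 if k ≤ ν₂(p−1), and (a^{2^{k-1}}|p)_{2^k} = 1 otherwise. -/
open Classical in
lemma rps_iff (k p : ℕ) (b : ℤ) :
    rps k p b = if ∃ x : ZMod p, x ^ 2 ^ k = (b : ZMod p) then 1 else -1 := by
  have h : (∃ x : ℤ, x ^ (2 ^ k) ≡ b [ZMOD (p : ℤ)]) ↔
      (∃ x : ZMod p, x ^ 2 ^ k = (b : ZMod p)) := by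
    constructor
    · rintro ⟨x, hx⟩
      refine ⟨(x : ZMod p), ?_⟩
      rw [← Int.cast_pow]
      exact (ZMod.intCast_eq_intCast_iff _ _ _).mpr hx
    · rintro ⟨x, hx⟩
      obtain ⟨y, rfl⟩ := ZMod.intCast_surjective x
      refine ⟨y, (ZMod.intCast_eq_intCast_iff _ _ _).mp ?_⟩
      push_cast
      exact hx
  simp only [rps, h]

theorem statement5 (k p : ℕ) (hk : 1 ≤ k) (hp : p.Prime) (a : ℤ) (hpa : ¬ (p : ℤ) ∣ a) :
    rps k p (a ^ 2 ^ (k - 1)) = if k ≤ padicValNat 2 (p - 1) then rps 1 p a else 1 := by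
  haveI : Fact p.Prime := ⟨hp⟩
  have ha : ((a : ℤ) : ZMod p) ≠ 0 := by
    rwa [Ne, ZMod.intCast_zmod_eq_zero_iff_dvd]
  have hcast : ((a ^ 2 ^ (k - 1) : ℤ) : ZMod p) = ((a : ℤ) : ZMod p) ^ 2 ^ (k - 1) := by
    push_cast; ring
  have h2k : (2 : ℕ) ^ k = 2 * 2 ^ (k - 1) := by
    rw [← pow_succ']
    congr 1
    omega
  set s := padicValNat 2 (p - 1) with hs
  by_cases hks : k ≤ s
  · rw [if_pos hks, rps_iff, rps_iff]
    have key : (∃ x : ZMod p, x ^ 2 ^ k = ((a ^ 2 ^ (k - 1) : ℤ) : ZMod p)) ↔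
        (∃ x : ZMod p, x ^ 2 ^ 1 = ((a : ℤ) : ZMod p)) := by
      constructor
      · rintro ⟨x, hx⟩
        rw [hcast] at hx
        have hx0 : x ≠ 0 := by
          rintro rfl
          rw [zero_pow (by positivity)] at hx
          exact ha ((pow_eq_zero_iff (by positivity)).mp hx.symm)
        obtain ⟨m, hm⟩ : (2 : ℕ) ^ k ∣ p - 1 :=
          dvd_trans (pow_dvd_pow 2 hks) pow_padicValNat_dvd
        have e2 : p / 2 = 2 ^ (k - 1) * m := by
          have hm' : p - 1 = 2 * (2 ^ (k - 1) * m) := by rw [hm, h2k, mul_assoc]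
          have hp2 := hp.two_le
          omega
        have hfe : ((a : ℤ) : ZMod p) ^ (p / 2) = 1 := by
          rw [e2, pow_mul, ← hx, ← pow_mul, ← hm, ZMod.pow_card_sub_one_eq_one hx0]
        obtain ⟨r, hr⟩ := (ZMod.euler_criterion p ha).mpr hfe
        exact ⟨r, by rw [pow_one, sq]; exact hr.symm⟩
      · rintro ⟨x, hx⟩
        refine ⟨x, ?_⟩
        rw [hcast, ← hx, ← pow_mul, ← pow_add, show 1 + (k - 1) = k by omega]
    rw [key]
  · rw [if_neg hks, rps_iff, if_pos]
    have hp1 : p - 1 ≠ 0 := by have := hp.two_le; omega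
    obtain ⟨m, hm⟩ : (2 : ℕ) ^ s ∣ p - 1 := pow_padicValNat_dvd
    have hmodd : ¬ 2 ∣ m := by
      intro ⟨c, hc⟩
      apply pow_succ_padicValNat_not_dvd hp1 (p := 2)
      rw [← hs, hm, hc, pow_succ]
      exact ⟨c, by ring⟩
    obtain ⟨c, hc⟩ : ∃ c, m = 2 * c + 1 := ⟨m / 2, by omega⟩
    have h2k1 : (2 : ℕ) ^ (k - 1) = 2 ^ s * 2 ^ (k - 1 - s) := by
      rw [← pow_add]
      congr 1
      omega
    have e1 : (c + 1) * 2 ^ k = 2 ^ (k - 1) + (p - 1) * 2 ^ (k - 1 - s) := by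
      rw [h2k, hm, hc, h2k1]
      ring
    refine ⟨((a : ℤ) : ZMod p) ^ (c + 1), ?_⟩
    rw [hcast, ← pow_mul, e1, pow_add, pow_mul, ZMod.pow_card_sub_one_eq_one ha, one_pow, mul_one]
end

section
/- Let k ∈ ℕ, let p be a prime, and let a ∈ ℤ with p ∤ a. Assume (a|p)_{2^{k-1}} = 1. Then multiplication by a maps the set Z*_{p,2^{k-1}} bijectively onto itself, and (a|p)_{2^k} equals the sign of the permutation of Z*_{p,2^{k-1}} given by x ↦ ax (mod p). -/
/- `Z*_{n,2^k}`: the set of `2^k`-th power residues among the units of `ℤ/nℤ`. -/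
open Classical in
noncomputable def QRunits (n k : ℕ) [NeZero n] : Finset ((ZMod n)ˣ) :=
  Finset.univ.filter fun r => ∃ x : ℤ, (x : ZMod n) ^ (2 ^ k) = (r : ZMod n)


open Equiv Equiv.Perm

lemma sign_mulLeft_gen {G : Type*} [Group G] [Fintype G] [DecidableEq G] (g : G)
    (hg : ∀ x : G, x ∈ Subgroup.zpowers g) (hcard : Even (Fintype.card G)) :
    Equiv.Perm.sign (Equiv.mulLeft g) = -1 := by
  have hg1 : g ≠ 1 := by
    rintro rfl
    have h1 : ∀ x : G, x = 1 := by
      intro x; obtain ⟨n, rfl⟩ := hg x; simp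
    have : Fintype.card G = 1 := Fintype.card_eq_one_iff.2 ⟨1, fun x => h1 x⟩
    rw [this] at hcard; simp [Nat.even_iff] at hcard
  have hfix : ∀ x : G, Equiv.mulLeft g x ≠ x := by
    intro x hx
    exact hg1 (mul_right_cancel (by simpa using hx : g * x = 1 * x))
  have hsupp : (Equiv.mulLeft g : Perm G).support = Finset.univ := by
    ext x; simp only [Equiv.Perm.mem_support, Finset.mem_univ, iff_true]
    exact hfix x
  have hcyc : (Equiv.mulLeft g : Perm G).IsCycle := by
    refine ⟨1, hfix 1, fun y _ => ?_⟩
    obtain ⟨n, rfl⟩ := hg y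
    exact ⟨n, by rw [Equiv.zpow_mulLeft]; simp⟩
  rw [hcyc.sign, hsupp, Finset.card_univ, Even.neg_one_pow hcard]

lemma sign_mulLeft_eq_one_iff {G : Type*} [Group G] [Fintype G] [DecidableEq G] [IsCyclic G]
    (b : G) : Equiv.Perm.sign (Equiv.mulLeft b) = 1 ↔ ∃ c : G, c ^ 2 = b := by
  constructor
  · intro hs
    by_contra hc
    push_neg at hc
    obtain ⟨g, hg⟩ := IsCyclic.exists_generator (α := G)
    have hcard : Even (Fintype.card G) := by
      by_contra hodd
      rw [Nat.not_even_iff_odd] at hodd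
      obtain ⟨t, ht⟩ := hodd
      refine hc (b ^ (t + 1)) ?_
      rw [← pow_mul]
      have : (t + 1) * 2 = Fintype.card G + 1 := by omega
      rw [this, pow_succ, pow_card_eq_one, one_mul]
    obtain ⟨n, hn⟩ := hg b
    have hnodd : Odd n := by
      rcases Int.even_or_odd n with he | ho
      · obtain ⟨m, rfl⟩ := he
        exact absurd (by rw [← hn]; rw [← zpow_natCast]; push_cast; rw [← zpow_mul]; ring_nf)
          (hc (g ^ m))
      · exact ho
    have h2 : Equiv.Perm.sign (Equiv.mulLeft b) = (-1 : ℤˣ) ^ n := by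
      rw [← hn]
      show Equiv.Perm.sign (Equiv.mulLeft (g ^ n)) = _
      rw [← Equiv.zpow_mulLeft, map_zpow, sign_mulLeft_gen g hg hcard]
    rw [h2] at hs
    obtain ⟨m, rfl⟩ := hnodd
    rw [zpow_add, zpow_mul, zpow_one] at hs
    rw [show ((-1 : ℤˣ) ^ (2:ℤ)) = 1 by decide, one_zpow] at hs
    exact absurd hs (by decide)
  · rintro ⟨c, rfl⟩
    rw [← Equiv.pow_mulLeft, map_pow]
    exact Int.units_sq _

theorem statement6 (k p : ℕ) (hk : 1 ≤ k) (hp : p.Prime) [NeZero p] (a : ℤ)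
    (hpa : ¬ (p : ℤ) ∣ a) (h : rps (k - 1) p a = 1) :
    ∃ σ : Equiv.Perm (QRunits p (k - 1)),
      (∀ x : QRunits p (k - 1),
        ((σ x : (ZMod p)ˣ) : ZMod p) = (a : ZMod p) * ((x : (ZMod p)ˣ) : ZMod p)) ∧
      (Equiv.Perm.sign σ : ℤ) = rps k p a := by
  classical
  haveI := Fact.mk hp
  set n := k - 1 with hn0
  have hn : n + 1 = k := Nat.succ_pred_eq_of_pos hk
  have ha0 : (a : ZMod p) ≠ 0 := by
    rw [Ne, ZMod.intCast_zmod_eq_zero_iff_dvd]; exact hpa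
  have hau : IsUnit (a : ZMod p) := isUnit_iff_ne_zero.2 ha0
  set u := hau.unit with hudef
  have hu : (u : ZMod p) = a := hau.unit_spec
  set H : Subgroup (ZMod p)ˣ := MonoidHom.range (powMonoidHom (2 ^ n)) with hH
  -- from an integer power condition to a unit
  have key : ∀ (m : ℕ) (r : (ZMod p)ˣ),
      (∃ x : ℤ, (x : ZMod p) ^ (2 ^ m) = (r : ZMod p)) ↔ ∃ y : (ZMod p)ˣ, y ^ (2 ^ m) = r := by
    intro m r
    constructor
    · rintro ⟨x, hx⟩
      have hx0 : (x : ZMod p) ≠ 0 := by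
        intro h0
        rw [h0, zero_pow (by positivity)] at hx
        exact r.ne_zero hx.symm
      have hxu : IsUnit (x : ZMod p) := isUnit_iff_ne_zero.2 hx0
      refine ⟨hxu.unit, Units.ext ?_⟩
      push_cast
      rw [hxu.unit_spec, hx]
    · rintro ⟨y, hy⟩
      refine ⟨(((y : ZMod p).val : ℤ)), ?_⟩
      have hcast : ((((y : ZMod p).val : ℤ)) : ZMod p) = (y : ZMod p) := by
        push_cast
        rw [ZMod.natCast_val, ZMod.cast_id]
      rw [hcast, ← Units.val_pow_eq_pow_val, hy]
  have hmem : ∀ r : (ZMod p)ˣ, r ∈ QRunits p n ↔ r ∈ H := by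
    intro r
    rw [QRunits, Finset.mem_filter]
    simp only [Finset.mem_univ, true_and]
    rw [key n r]
    rfl
  -- u ∈ H
  have hcond : ∀ m : ℕ, (∃ x : ℤ, x ^ (2 ^ m) ≡ a [ZMOD (p : ℤ)]) ↔ ∃ y : (ZMod p)ˣ, y ^ (2 ^ m) = u := by
    intro m
    rw [← key m u]
    constructor <;> rintro ⟨x, hx⟩ <;> refine ⟨x, ?_⟩
    · have := (ZMod.intCast_eq_intCast_iff' _ _ _).2 hx
      push_cast at this
      rw [this, hu]
    · exact (ZMod.intCast_eq_intCast_iff' _ _ _).mp (by push_cast; rw [hx, hu])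
  have hu_mem : u ∈ H := by
    have hx : ∃ x : ℤ, x ^ (2 ^ n) ≡ a [ZMOD (p : ℤ)] := by
      by_contra hx
      rw [rps, if_neg hx] at h
      norm_num at h
    obtain ⟨y, hy⟩ := (hcond n).1 hx
    exact ⟨y, hy⟩
  -- the equivalence and the permutation
  let e : {r // r ∈ QRunits p n} ≃ H := Equiv.subtypeEquivRight hmem
  let σ' : Equiv.Perm H := Equiv.mulLeft (⟨u, hu_mem⟩ : H)
  refine ⟨e.permCongr.symm σ', ?_, ?_⟩
  · intro x
    have : (e.permCongr.symm σ') x = e.symm (σ' (e x)) := rfl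
    rw [this]
    have h1 : ((e.symm (σ' (e x)) : (ZMod p)ˣ)) = ((σ' (e x) : H) : (ZMod p)ˣ) := rfl
    rw [h1]
    have h2 : ((σ' (e x) : H) : (ZMod p)ˣ) = u * ((e x : H) : (ZMod p)ˣ) := rfl
    rw [h2]
    have h3 : ((e x : H) : (ZMod p)ˣ) = (x : (ZMod p)ˣ) := rfl
    rw [h3, Units.val_mul, hu]
  · have hsign : Equiv.Perm.sign (e.permCongr.symm σ') = Equiv.Perm.sign σ' := by
      rw [Equiv.permCongr_symm]
      exact Equiv.Perm.sign_permCongr e.symm σ'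
    rw [hsign]
    haveI : IsCyclic H := subgroup_units_cyclic H
    have hiff := sign_mulLeft_eq_one_iff (⟨u, hu_mem⟩ : H)
    -- squares in H correspond to 2^k-th powers
    have hsq : (∃ c : H, c ^ 2 = (⟨u, hu_mem⟩ : H)) ↔ ∃ y : (ZMod p)ˣ, y ^ (2 ^ k) = u := by
      constructor
      · rintro ⟨c, hc⟩
        obtain ⟨y, hy⟩ := c.2
        refine ⟨y, ?_⟩
        have : (c : (ZMod p)ˣ) ^ 2 = u := by
          rw [← Subgroup.coe_pow, hc]
        rw [← this, ← hy]
        show y ^ 2 ^ k = (y ^ 2 ^ n) ^ 2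
        rw [← pow_mul, ← pow_succ, hn]
      · rintro ⟨y, hy⟩
        refine ⟨⟨y ^ 2 ^ n, ⟨y, rfl⟩⟩, ?_⟩
        apply Subtype.ext
        rw [SubmonoidClass.coe_pow]
        show (y ^ 2 ^ n) ^ 2 = u
        rw [← pow_mul, ← pow_succ, hn, hy]
    rw [rps]
    split_ifs with hx
    · have : Equiv.Perm.sign σ' = 1 := hiff.2 (hsq.2 ((hcond k).1 hx))
      rw [this]; rfl
    · have : Equiv.Perm.sign σ' ≠ 1 := by
        intro h1
        exact hx ((hcond k).2 (hsq.1 (hiff.1 h1)))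
      rcases Int.units_eq_one_or (Equiv.Perm.sign σ') with h1 | h1
      · exact absurd h1 this
      · rw [h1]; rfl
end

section
/- Let k ∈ ℕ and N = pq with p, q odd primes, p ≠ q. Let m ∈ ℕ be coprime to N with (m|p)_{2^{k-1}} = (m|q)_{2^{k-1}} = 1, and suppose N ≢ 1 (mod 2^k). Then multiplication by m permutes the set Z*_{N,2^{k-1}}, and (m|N)_{2^k} equals the sign of the permutation of Z*_{N,2^{k-1}} given by x ↦ mx (mod N). -/
open scoped Classical

lemma rps_eq_one_iff (k p : ℕ) (a : ℤ) :
    rps k p a = 1 ↔ ∃ x : ℤ, x ^ (2 ^ k) ≡ a [ZMOD (p : ℤ)] := by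
  unfold rps
  split <;> simp_all

lemma rps_eq_neg_one (k p : ℕ) (a : ℤ) (h : ¬ ∃ x : ℤ, x ^ (2 ^ k) ≡ a [ZMOD (p : ℤ)]) :
    rps k p a = -1 := by
  unfold rps; rw [if_neg h]

lemma mem_QRunits_iff {n : ℕ} [NeZero n] (kk : ℕ) (r : (ZMod n)ˣ) :
    r ∈ QRunits n kk ↔ ∃ u : (ZMod n)ˣ, u ^ (2 ^ kk) = r := by
  unfold QRunits
  simp only [Finset.mem_filter, Finset.mem_univ, true_and]
  constructor
  · rintro ⟨x, hx⟩
    have hu : IsUnit ((x : ZMod n) ^ (2 ^ kk)) := hx ▸ r.isUnit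
    have hux : IsUnit (x : ZMod n) := (isUnit_pow_iff (by positivity)).mp hu
    refine ⟨hux.unit, Units.ext ?_⟩
    push_cast
    rw [hux.unit_spec, hx]
  · rintro ⟨u, hu⟩
    refine ⟨(ZMod.cast ((u : ZMod n)) : ℤ), ?_⟩
    rw [ZMod.intCast_zmod_cast]
    rw [← hu]
    push_cast
    rfl

open Equiv Equiv.Perm in
lemma mulLeft_eq_toPermHom {G : Type*} [Group G] (g : G) :
    Equiv.mulLeft g = MulAction.toPermHom G G g := by
  ext x; rfl

open Equiv Equiv.Perm in
lemma sign_mulLeft_gen_pow {G : Type*} [Group G] [Fintype G] [DecidableEq G]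
    (z : G) (hz : ∀ x : G, x ∈ Subgroup.zpowers z) (e : ℕ) :
    Equiv.Perm.sign (Equiv.mulLeft (z ^ e)) = ((-1) ^ (Fintype.card G - 1)) ^ e := by
  have hpow : Equiv.mulLeft (z ^ e) = (Equiv.mulLeft z) ^ e := by
    rw [mulLeft_eq_toPermHom, mulLeft_eq_toPermHom, map_pow]
  rw [hpow, map_pow]
  congr 1
  rcases Nat.lt_or_ge 1 (Fintype.card G) with hc | hc
  · -- card > 1 : mulLeft z is a full cycle
    have hz1 : z ≠ 1 := by
      rintro rfl
      have : ∀ x : G, x = 1 := by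
        intro x
        obtain ⟨i, hi⟩ := hz x
        simpa using hi.symm
      have : Fintype.card G ≤ 1 := Fintype.card_le_one_iff.mpr (by simp [this])
      omega
    have hfix : ∀ x : G, Equiv.mulLeft z x ≠ x := by
      intro x hx
      exact hz1 (by simpa using mul_right_cancel (b := x) (by simpa using hx))
    have hcyc : (Equiv.mulLeft z).IsCycle := by
      refine ⟨1, hfix 1, ?_⟩
      intro y _
      obtain ⟨i, hi⟩ := hz y
      refine ⟨i, ?_⟩
      have : (Equiv.mulLeft z) ^ i = Equiv.mulLeft (z ^ i) := by
        rw [mulLeft_eq_toPermHom, mulLeft_eq_toPermHom, map_zpow]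
      rw [this]
      simpa using hi
    have hsupp : (Equiv.mulLeft z).support = Finset.univ := by
      ext x; simp [Equiv.Perm.mem_support, hfix x, hz1]
    rw [hcyc.sign, hsupp]
    simp only [Finset.card_univ]
    obtain ⟨t, ht⟩ : ∃ t, Fintype.card G = t + 1 := ⟨Fintype.card G - 1, by omega⟩
    rw [ht]
    simp [pow_succ]
  · -- card ≤ 1 : trivial
    have h1 : Fintype.card G = 1 := le_antisymm hc Fintype.card_pos
    haveI : Subsingleton G := Fintype.card_le_one_iff_subsingleton.mp hc
    have hz1 : Equiv.mulLeft z = 1 := Subsingleton.elim _ _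
    rw [hz1, h1]
    simp

open Equiv Equiv.Perm in
lemma sign_mulLeft_prod {A B : Type*} [Group A] [Group B] [Fintype A] [Fintype B]
    [DecidableEq A] [DecidableEq B] (a : A) (b : B) :
    Equiv.Perm.sign (Equiv.mulLeft ((a, b) : A × B)) =
      (Equiv.Perm.sign (Equiv.mulLeft a)) ^ Fintype.card B *
        (Equiv.Perm.sign (Equiv.mulLeft b)) ^ Fintype.card A := by
  have hdec : Equiv.mulLeft ((a, b) : A × B) =
      (Equiv.prodCongrLeft (fun _ : B => Equiv.mulLeft a)) *
        (Equiv.prodCongrRight (fun _ : A => Equiv.mulLeft b)) := by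
    ext ⟨x, y⟩ <;> rfl
  rw [hdec, map_mul, Equiv.Perm.sign_prodCongrLeft, Equiv.Perm.sign_prodCongrRight]
  simp [Finset.prod_const, Finset.card_univ]

open Equiv Equiv.Perm in
lemma sign_mulLeft_of_iso {G G' : Type*} [Group G] [Group G'] [Fintype G] [Fintype G']
    [DecidableEq G] [DecidableEq G'] (φ : G ≃* G') (g : G) :
    Equiv.Perm.sign (Equiv.mulLeft g) = Equiv.Perm.sign (Equiv.mulLeft (φ g)) :=
  Equiv.Perm.sign_eq_sign_of_equiv _ _ φ.toEquiv (by intro x; simp)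

open Equiv Equiv.Perm in
lemma prime_side (k r : ℕ) (hk : 1 ≤ k) (hr : r.Prime) [NeZero r] (m : ℕ)
    (g : ((powMonoidHom (2 ^ (k - 1)) : (ZMod r)ˣ →* (ZMod r)ˣ).range))
    (hg : ((g : (ZMod r)ˣ) : ZMod r) = (m : ZMod r)) :
    (((Equiv.Perm.sign (Equiv.mulLeft g)) : ℤˣ) : ℤ) = rps k r (m : ℤ) ∧
    (¬ Even (Fintype.card ((powMonoidHom (2 ^ (k - 1)) : (ZMod r)ˣ →* (ZMod r)ˣ).range)) →
      Equiv.Perm.sign (Equiv.mulLeft g) = 1) ∧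
    (Even (Fintype.card ((powMonoidHom (2 ^ (k - 1)) : (ZMod r)ˣ →* (ZMod r)ˣ).range)) →
      2 ^ k ∣ r - 1) := by
  haveI : Fact r.Prime := ⟨hr⟩
  set n : ℕ := Fintype.card ((powMonoidHom (2 ^ (k - 1)) : (ZMod r)ˣ →* (ZMod r)ˣ).range)
    with hn
  have hnpos : 0 < n := Fintype.card_pos
  have h2k : 2 ^ (k - 1) * 2 = 2 ^ k := by
    rw [← pow_succ]; congr 1; omega
  obtain ⟨z, hzgen⟩ :=
    IsCyclic.exists_generator (α := ((powMonoidHom (2 ^ (k - 1)) : (ZMod r)ˣ →* (ZMod r)ˣ).range))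
  have hordz : orderOf z = n := by
    rw [orderOf_eq_card_of_forall_mem_zpowers hzgen, Nat.card_eq_fintype_card]
  obtain ⟨e, he⟩ : ∃ e : ℕ, z ^ e = g := by
    have := hzgen g
    rwa [← mem_powers_iff_mem_zpowers, Submonoid.mem_powers_iff] at this
  have hsign : Equiv.Perm.sign (Equiv.mulLeft g) = ((-1) ^ (n - 1)) ^ e := by
    rw [← he]; exact sign_mulLeft_gen_pow z hzgen e
  -- the residue condition is equivalent to g being a square
  have hiff : (∃ x : ℤ, x ^ (2 ^ k) ≡ (m : ℤ) [ZMOD (r : ℤ)]) ↔ IsSquare g := by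
    constructor
    · rintro ⟨x, hx⟩
      have hx' : ((x : ZMod r)) ^ (2 ^ k) = ((g : (ZMod r)ˣ) : ZMod r) := by
        have := (ZMod.intCast_eq_intCast_iff _ _ _).mpr hx
        push_cast at this
        rw [this, ← hg]
      have hux : IsUnit ((x : ZMod r)) := by
        refine (isUnit_pow_iff (by positivity : (2:ℕ)^k ≠ 0)).mp ?_
        rw [hx']; exact (g : (ZMod r)ˣ).isUnit
      have hu : hux.unit ^ (2 ^ k) = (g : (ZMod r)ˣ) := by
        apply Units.ext; push_cast [hux.unit_spec]; exact hx'
      refine ⟨⟨hux.unit ^ (2 ^ (k - 1)), ⟨hux.unit, rfl⟩⟩, ?_⟩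
      apply Subtype.ext
      show (g : (ZMod r)ˣ) = hux.unit ^ (2 ^ (k-1)) * hux.unit ^ (2 ^ (k-1))
      rw [← pow_add, ← hu]
      congr 1
      omega
    · rintro ⟨s, hs⟩
      obtain ⟨u, hu⟩ := s.2
      have hu' : u ^ (2 ^ (k-1)) = (s : (ZMod r)ˣ) := hu
      have hval : u ^ (2 ^ k) = (g : (ZMod r)ˣ) := by
        rw [← h2k, pow_mul, hu']
        have hss := congrArg (Subtype.val) hs
        push_cast at hss
        rw [sq, ← hss]
      refine ⟨(ZMod.cast ((u : ZMod r)) : ℤ), ?_⟩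
      rw [← ZMod.intCast_eq_intCast_iff]
      push_cast
      rw [← hg, ← hval]
      push_cast
      rfl
  by_cases hne : Even n
  · -- n even
    have hodd : ¬ Even (n - 1) := by
      rw [Nat.even_sub (by omega)]; simp [hne]
    have h1 : ((-1 : ℤˣ) ^ (n - 1)) = -1 := Odd.neg_one_pow (Nat.not_even_iff_odd.mp hodd)
    have hsign' : Equiv.Perm.sign (Equiv.mulLeft g) = (-1) ^ e := by rw [hsign, h1]
    have hsq_iff : IsSquare g ↔ Even e := by
      constructor
      · rintro ⟨s, hs⟩
        obtain ⟨f, hf⟩ : ∃ f : ℕ, z ^ f = s := by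
          have := hzgen s
          rwa [← mem_powers_iff_mem_zpowers, Submonoid.mem_powers_iff] at this
        have hzz : z ^ e = z ^ (f + f) := by
          rw [he, pow_add, hf, hs]
        have hmod : e ≡ f + f [MOD n] := by
          rwa [pow_eq_pow_iff_modEq, hordz] at hzz
        have h2 : (2:ℤ) ∣ ((f:ℤ) + f) - e :=
          dvd_trans (by exact_mod_cast hne.two_dvd) hmod.dvd
        obtain ⟨c, hc⟩ := h2
        have he2 : (e : ℤ) % 2 = 0 := by omega
        refine Nat.even_iff.mpr ?_
        exact_mod_cast he2
      · rintro ⟨c, hc⟩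
        exact ⟨z ^ c, by rw [← he, hc, pow_add]⟩
    refine ⟨?_, fun h => absurd hne h, ?_⟩
    · by_cases hee : Even e
      · rw [hsign', hee.neg_one_pow, (rps_eq_one_iff _ _ _).mpr (hiff.mpr (hsq_iff.mpr hee))]
        rfl
      · have hrps : rps k r (m : ℤ) = -1 := by
          apply rps_eq_neg_one
          intro hx
          exact hee (hsq_iff.mp (hiff.mp hx))
        rw [hsign', (Nat.not_even_iff_odd.mp hee).neg_one_pow, hrps]
        rfl
    · -- Even n → 2^k ∣ r - 1
      intro _
      haveI : Fact (Nat.Prime 2) := ⟨Nat.prime_two⟩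
      obtain ⟨b, hb⟩ := exists_prime_orderOf_dvd_card
        (G := ((powMonoidHom (2 ^ (k - 1)) : (ZMod r)ˣ →* (ZMod r)ˣ).range)) 2
        (by rw [← hn]; exact hne.two_dvd)
      obtain ⟨u, hu⟩ := b.2
      have hb2 : b ^ 2 = 1 := by have h := pow_orderOf_eq_one b; rwa [hb] at h
      have hbne : b ≠ 1 := by
        intro h; rw [h, orderOf_one] at hb; omega
      have hu' : u ^ (2 ^ (k-1)) = (b : (ZMod r)ˣ) := hu
      have hu2k : u ^ (2 ^ k) = 1 := by
        rw [← h2k, pow_mul, hu']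
        have hbb := congrArg (Subtype.val) hb2
        push_cast at hbb
        exact_mod_cast hbb
      have hune : u ^ (2 ^ (k - 1)) ≠ 1 := by
        intro h
        apply hbne
        apply Subtype.ext
        rw [← hu', h]
        rfl
      have hdvd : orderOf u ∣ 2 ^ k := orderOf_dvd_of_pow_eq_one hu2k
      obtain ⟨j, hjk, hj⟩ := (Nat.dvd_prime_pow Nat.prime_two).mp hdvd
      have hjeq : j = k := by
        by_contra hnej
        apply hune
        apply orderOf_dvd_iff_pow_eq_one.mp
        rw [hj]
        exact pow_dvd_pow 2 (by omega)
      have hcard : (2:ℕ) ^ k ∣ Fintype.card (ZMod r)ˣ := by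
        rw [← hjeq, ← hj]
        exact orderOf_dvd_card
      rwa [ZMod.card_units_eq_totient, Nat.totient_prime hr] at hcard
  · -- n odd
    have heven : Even (n - 1) := by
      rw [Nat.even_sub (by omega)]; simp [hne]
    have hsign' : Equiv.Perm.sign (Equiv.mulLeft g) = 1 := by
      rw [hsign, heven.neg_one_pow, one_pow]
    have hsq : IsSquare g := by
      obtain ⟨w, hw⟩ := Nat.not_even_iff_odd.mp hne
      refine ⟨z ^ (e * (w + 1)), ?_⟩
      have harith : e * (w + 1) + e * (w + 1) = n * e + e := by
        rw [hw]; ring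
      rw [← he, ← pow_add, harith, pow_add, pow_mul]
      rw [show z ^ n = 1 from hn ▸ pow_card_eq_one]
      rw [one_pow, one_mul]
    refine ⟨?_, fun _ => hsign', fun h => absurd h hne⟩
    rw [hsign', (rps_eq_one_iff _ _ _).mpr (hiff.mpr hsq)]
    rfl

lemma rps_eq_or (k p : ℕ) (a : ℤ) : rps k p a = 1 ∨ rps k p a = -1 := by
  unfold rps; split <;> simp

lemma pow_self_of_pm_one {s : ℤ} (hs : s = 1 ∨ s = -1) {n : ℕ} (hn : ¬ Even n) :
    s ^ n = s := by
  rcases hs with h | h <;> subst h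
  · simp
  · exact Odd.neg_one_pow (Nat.not_even_iff_odd.mp hn)

theorem statement10 (k p q : ℕ) (hk : 1 ≤ k) (hp : p.Prime) (hq : q.Prime)
    [NeZero p] [NeZero q] (hpo : Odd p) (hqo : Odd q) (hpq : p ≠ q)
    (m : ℕ) (hm : Nat.Coprime m (p * q))
    (hmp : rps (k - 1) p (m : ℤ) = 1) (hmq : rps (k - 1) q (m : ℤ) = 1)
    (hN : ¬ (p * q) ≡ 1 [MOD 2 ^ k]) :
    ∃ σ : Equiv.Perm (QRunits (p * q) (k - 1)),
      (∀ x : QRunits (p * q) (k - 1),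
        ((σ x : (ZMod (p * q))ˣ) : ZMod (p * q)) =
          (m : ZMod (p * q)) * ((x : (ZMod (p * q))ˣ) : ZMod (p * q))) ∧
      (Equiv.Perm.sign σ : ℤ) = rpsN k (p * q) (m : ℤ) := by
  haveI : Fact p.Prime := ⟨hp⟩
  haveI : Fact q.Prime := ⟨hq⟩
  have hc : Nat.Coprime p q := (Nat.coprime_primes hp hq).mpr hpq
  let E : (ZMod (p*q))ˣ ≃* (ZMod p)ˣ × (ZMod q)ˣ :=
    (Units.mapEquiv (ZMod.chineseRemainder hc).toMulEquiv).trans MulEquiv.prodUnits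
  let H : Subgroup (ZMod (p*q))ˣ := (powMonoidHom (2 ^ (k-1))).range
  let Hp : Subgroup (ZMod p)ˣ := (powMonoidHom (2 ^ (k-1))).range
  let Hq : Subgroup (ZMod q)ˣ := (powMonoidHom (2 ^ (k-1))).range
  have hmap : H.map (E : (ZMod (p*q))ˣ →* (ZMod p)ˣ × (ZMod q)ˣ) = Hp.prod Hq := by
    ext y
    simp only [Subgroup.mem_map, MonoidHom.mem_range, powMonoidHom_apply, Subgroup.mem_prod,
      H, Hp, Hq]
    constructor
    · rintro ⟨x, ⟨u, rfl⟩, rfl⟩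
      exact ⟨⟨(E u).1, by simp [map_pow]⟩, ⟨(E u).2, by simp [map_pow]⟩⟩
    · rintro ⟨⟨v1, hv1⟩, ⟨v2, hv2⟩⟩
      refine ⟨E.symm (v1, v2) ^ (2 ^ (k-1)), ⟨E.symm (v1, v2), rfl⟩, ?_⟩
      have hE : (E : (ZMod (p*q))ˣ →* (ZMod p)ˣ × (ZMod q)ˣ) (E.symm (v1, v2) ^ (2 ^ (k-1)))
          = (v1, v2) ^ (2 ^ (k-1)) := by simp [map_pow]
      rw [hE, Prod.pow_def, hv1, hv2]
  let F : H ≃* Hp × Hq :=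
    ((E.subgroupMap H).trans (MulEquiv.subgroupCongr hmap)).trans (Subgroup.prodEquiv Hp Hq)
  -- the unit corresponding to m
  set a : (ZMod (p*q))ˣ := ZMod.unitOfCoprime m hm with ha
  have ham : (a : ZMod (p*q)) = (m : ZMod (p*q)) := ZMod.coe_unitOfCoprime m hm
  -- a is a 2^(k-1)-th power
  have haH : a ∈ H := by
    obtain ⟨xp, hxp⟩ := (rps_eq_one_iff _ _ _).mp hmp
    obtain ⟨xq, hxq⟩ := (rps_eq_one_iff _ _ _).mp hmq
    obtain ⟨y, hy⟩ := (ZMod.chineseRemainder hc).surjective ((xp : ZMod p), (xq : ZMod q))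
    have hydm : y ^ (2 ^ (k-1)) = (m : ZMod (p*q)) := by
      apply (ZMod.chineseRemainder hc).injective
      rw [map_pow, hy, map_natCast]
      have h1 : ((xp : ZMod p)) ^ (2 ^ (k-1)) = (m : ZMod p) := by
        have := (ZMod.intCast_eq_intCast_iff _ _ _).mpr hxp
        push_cast at this
        exact this
      have h2 : ((xq : ZMod q)) ^ (2 ^ (k-1)) = (m : ZMod q) := by
        have := (ZMod.intCast_eq_intCast_iff _ _ _).mpr hxq
        push_cast at this
        exact this
      rw [Prod.pow_def, h1, h2]
      rfl
    have hui : IsUnit y := by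
      refine (isUnit_pow_iff (by positivity : (2:ℕ)^(k-1) ≠ 0)).mp ?_
      rw [hydm, ← ham]
      exact a.isUnit
    refine ⟨hui.unit, ?_⟩
    apply Units.ext
    show (hui.unit : ZMod (p*q)) ^ (2 ^ (k-1)) = (a : ZMod (p*q))
    rw [hui.unit_spec, hydm, ham]
  -- the equivalence between QRunits and the subgroup H
  let eqv : (QRunits (p*q) (k-1) : Finset ((ZMod (p*q))ˣ)) ≃ H :=
    Equiv.subtypeEquivRight (fun x => by
      rw [mem_QRunits_iff]
      constructor
      · rintro ⟨u, hu⟩; exact ⟨u, hu⟩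
      · rintro ⟨u, hu⟩; exact ⟨u, hu⟩)
  let σ0 : Equiv.Perm H := Equiv.mulLeft (⟨a, haH⟩ : H)
  refine ⟨eqv.symm.permCongr σ0, ?_, ?_⟩
  · intro x
    show (((eqv.symm.permCongr σ0) x : (ZMod (p*q))ˣ) : ZMod (p*q)) = _
    have hval : ((eqv.symm.permCongr σ0) x : (ZMod (p*q))ˣ) = a * (x : (ZMod (p*q))ˣ) := rfl
    rw [hval, Units.val_mul, ham]
  · -- the sign computation
    have hsgn1 : Equiv.Perm.sign (eqv.symm.permCongr σ0) = Equiv.Perm.sign σ0 :=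
      Equiv.Perm.sign_permCongr eqv.symm σ0
    have hsgn2 : Equiv.Perm.sign σ0 = Equiv.Perm.sign (Equiv.mulLeft (F ⟨a, haH⟩)) :=
      sign_mulLeft_of_iso F _
    set gp : Hp := (F ⟨a, haH⟩).1 with hgpdef
    set gq : Hq := (F ⟨a, haH⟩).2 with hgqdef
    have hsgn3 : Equiv.Perm.sign (Equiv.mulLeft (F ⟨a, haH⟩)) =
        (Equiv.Perm.sign (Equiv.mulLeft gp)) ^ Fintype.card Hq *
          (Equiv.Perm.sign (Equiv.mulLeft gq)) ^ Fintype.card Hp := by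
      rw [show F ⟨a, haH⟩ = (gp, gq) from rfl]
      exact sign_mulLeft_prod gp gq
    have hgp : ((gp : (ZMod p)ˣ) : ZMod p) = (m : ZMod p) := by
      have h0 : ((gp : (ZMod p)ˣ) : ZMod p)
          = (ZMod.chineseRemainder hc ((a : ZMod (p*q)))).1 := rfl
      rw [h0, ham, map_natCast]
      rfl
    have hgq : ((gq : (ZMod q)ˣ) : ZMod q) = (m : ZMod q) := by
      have h0 : ((gq : (ZMod q)ˣ) : ZMod q)
          = (ZMod.chineseRemainder hc ((a : ZMod (p*q)))).2 := rfl
      rw [h0, ham, map_natCast]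
      rfl
    obtain ⟨hp1, hp2, hp3⟩ := prime_side k p hk hp m gp hgp
    obtain ⟨hq1, hq2, hq3⟩ := prime_side k q hk hq m gq hgq
    have hrpsN : rpsN k (p*q) (m : ℤ) = rps k p (m : ℤ) * rps k q (m : ℤ) := by
      unfold rpsN
      rw [((Nat.perm_primeFactorsList_mul hp.pos.ne' hq.pos.ne').map _).prod_eq]
      rw [List.map_append, List.prod_append, Nat.primeFactorsList_prime hp,
        Nat.primeFactorsList_prime hq]
      simp
    have hnotboth : ¬ (Even (Fintype.card Hp) ∧ Even (Fintype.card Hq)) := by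
      rintro ⟨h1, h2⟩
      apply hN
      have hd1 : p ≡ 1 [MOD 2 ^ k] := ((Nat.modEq_iff_dvd' hp.one_lt.le).mpr (hp3 h1)).symm
      have hd2 : q ≡ 1 [MOD 2 ^ k] := ((Nat.modEq_iff_dvd' hq.one_lt.le).mpr (hq3 h2)).symm
      simpa using hd1.mul hd2
    rw [hsgn1, hsgn2, hsgn3, hrpsN]
    push_cast
    rw [hp1, hq1]
    by_cases hep : Even (Fintype.card Hp)
    · have heq : ¬ Even (Fintype.card Hq) := fun h => hnotboth ⟨hep, h⟩
      have : rps k q (m : ℤ) = 1 := by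
        have := hq2 heq
        rw [this] at hq1
        simpa using hq1.symm
      rw [this, pow_self_of_pm_one (rps_eq_or k p (m : ℤ)) heq]
      simp
    · have : rps k p (m : ℤ) = 1 := by
        have := hp2 hep
        rw [this] at hp1
        simpa using hp1.symm
      rw [this, pow_self_of_pm_one (rps_eq_or k q (m : ℤ)) hep]
      simp
end

section
/- Let N = pq with p, q odd primes, p ≠ q, and ν₂(p−1) = ν₂(q−1) =: k. Let a ∈ ℤ with gcd(a, N) = 1. Then for every i ∈ ℕ, (a^{2^{i-1}}|N)_{2^i} = (a|N)_2 if i ≤ k, and (a^{2^{i-1}}|N)_{2^i} = 1 if i > k. -/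
open Classical in
lemma rps_eq_if (k p : ℕ) (a : ℤ) :
    rps k p a = if ∃ x : ZMod p, x ^ 2 ^ k = (a : ZMod p) then 1 else -1 := by
  unfold rps
  congr 1
  apply propext
  constructor
  · rintro ⟨x, hx⟩
    refine ⟨(x : ZMod p), ?_⟩
    have := (ZMod.intCast_eq_intCast_iff' _ _ _).mpr hx
    push_cast at this
    exact this
  · rintro ⟨y, hy⟩
    obtain ⟨x, rfl⟩ := ZMod.intCast_surjective y
    refine ⟨x, (ZMod.intCast_eq_intCast_iff' _ _ _).mp ?_⟩
    push_cast
    exact hy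

lemma key (p : ℕ) (hp : p.Prime) (hpo : Odd p) (a : ZMod p) (ha : a ≠ 0)
    (i k : ℕ) (hi : 1 ≤ i) (hk : padicValNat 2 (p - 1) = k) :
    (i ≤ k → ((∃ x : ZMod p, x ^ 2 ^ i = a ^ 2 ^ (i - 1)) ↔ ∃ x : ZMod p, x ^ 2 ^ 1 = a)) ∧
    (k < i → ∃ x : ZMod p, x ^ 2 ^ i = a ^ 2 ^ (i - 1)) := by
  haveI : Fact p.Prime := ⟨hp⟩
  have hp2 : 2 ≤ p := hp.two_le
  have hfk : (p - 1).factorization 2 = k := by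
    rw [Nat.factorization_def _ Nat.prime_two, hk]
  set m := ordCompl[2] (p - 1) with hm
  have hpm : 2 ^ k * m = p - 1 := by
    rw [hm, ← hfk]; exact Nat.ordProj_mul_ordCompl_eq_self (p - 1) 2
  have hp1 : 1 ≤ p - 1 := by omega
  have hmodd : ¬ 2 ∣ m := Nat.not_dvd_ordCompl Nat.prime_two (by omega)
  have hm1 : 1 ≤ m := by
    rcases Nat.eq_zero_or_pos m with h | h
    · rw [h, mul_zero] at hpm; omega
    · exact h
  have hpe : 2 ∣ p - 1 := by
    obtain ⟨t, ht⟩ := hpo; omega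
  have hk1 : 1 ≤ k := by
    by_contra h
    have hk0 : k = 0 := by omega
    rw [hk0, pow_zero, one_mul] at hpm
    rw [hpm] at hmodd; exact hmodd hpe
  have h2k : 2 ^ k = 2 * 2 ^ (k - 1) := by
    rw [← pow_succ']; congr 1; omega
  have hhalf : p / 2 = 2 ^ (k - 1) * m := by
    have h1 : p - 1 = 2 * (2 ^ (k - 1) * m) := by rw [← hpm, h2k, mul_assoc]
    omega
  constructor
  · intro hik
    constructor
    · rintro ⟨x, hx⟩
      have hane : a ^ 2 ^ (i - 1) ≠ 0 := pow_ne_zero _ ha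
      have hx0 : x ≠ 0 := by
        rintro rfl
        rw [zero_pow (by positivity)] at hx
        exact hane hx.symm
      have hE : a ^ (p / 2) = 1 := by
        have e1 : 2 ^ (i - 1) * (2 ^ (k - i) * m) = 2 ^ (k - 1) * m := by
          rw [← mul_assoc, ← pow_add]; congr 2; omega
        have e2 : 2 ^ i * (2 ^ (k - i) * m) = 2 ^ k * m := by
          rw [← mul_assoc, ← pow_add]; congr 2; omega
        calc a ^ (p / 2) = (a ^ 2 ^ (i - 1)) ^ (2 ^ (k - i) * m) := by
              rw [← pow_mul, e1, hhalf]
          _ = (x ^ 2 ^ i) ^ (2 ^ (k - i) * m) := by rw [hx]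
          _ = x ^ (p - 1) := by rw [← pow_mul, e2, hpm]
          _ = 1 := ZMod.pow_card_sub_one_eq_one hx0
      obtain ⟨y, hy⟩ := (ZMod.euler_criterion p ha).mpr hE
      exact ⟨y, by rw [pow_one, pow_two]; exact hy.symm⟩
    · rintro ⟨x, hx⟩
      rw [pow_one] at hx
      refine ⟨x, ?_⟩
      have e : 2 ^ i = 2 * 2 ^ (i - 1) := by rw [← pow_succ']; congr 1; omega
      rw [e, pow_mul, hx]
  · intro hki
    set c := a ^ 2 ^ (i - 1) with hc
    have hcm : c ^ m = 1 := by
      rw [hc, ← pow_mul]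
      have e : 2 ^ (i - 1) * m = (p - 1) * 2 ^ (i - 1 - k) := by
        rw [← hpm]
        have : 2 ^ (i - 1) = 2 ^ k * 2 ^ (i - 1 - k) := by
          rw [← pow_add]; congr 1; omega
        rw [this]; ring
      rw [e, pow_mul, ZMod.pow_card_sub_one_eq_one ha, one_pow]
    set t := m.totient with htdef
    have ht1 : 1 ≤ t := Nat.totient_pos.mpr hm1
    have hcop : Nat.Coprime (2 ^ i) m :=
      Nat.Coprime.pow_left _ ((Nat.prime_two.coprime_iff_not_dvd).mpr hmodd)
    have hmodeq : (2 ^ i) ^ t ≡ 1 [MOD m] := Nat.ModEq.pow_totient hcop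
    have hge : 1 ≤ (2 ^ i) ^ t := Nat.one_le_pow _ _ (by positivity)
    have hdvd : m ∣ (2 ^ i) ^ t - 1 := (Nat.modEq_iff_dvd' hge).mp hmodeq.symm
    obtain ⟨v, hv⟩ := hdvd
    have hN : (2 ^ i) ^ t = 1 + m * v := by omega
    refine ⟨c ^ (2 ^ i) ^ (t - 1), ?_⟩
    rw [← pow_mul, ← pow_succ]
    have : t - 1 + 1 = t := by omega
    rw [this, hN, pow_add, pow_one, pow_mul, hcm, one_pow, mul_one]


open Classical in
lemma rps_eq_of_iff {k p : ℕ} {a : ℤ} {k' p' : ℕ} {a' : ℤ}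
    (h : (∃ x : ZMod p, x ^ 2 ^ k = (a : ZMod p)) ↔
      (∃ x : ZMod p', x ^ 2 ^ k' = (a' : ZMod p'))) :
    rps k p a = rps k' p' a' := by
  rw [rps_eq_if, rps_eq_if]
  exact if_congr h rfl rfl

open Classical in
lemma rps_eq_one {k p : ℕ} {a : ℤ} (h : ∃ x : ZMod p, x ^ 2 ^ k = (a : ZMod p)) :
    rps k p a = 1 := by
  rw [rps_eq_if, if_pos h]

lemma rpsN_two (i p q : ℕ) (hp : p.Prime) (hq : q.Prime) (b : ℤ) :
    rpsN i (p * q) b = rps i p b * rps i q b := by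
  unfold rpsN
  have hperm := Nat.perm_primeFactorsList_mul hp.ne_zero hq.ne_zero
  rw [((hperm.map (fun r => rps i r b))).prod_eq]
  simp [Nat.primeFactorsList_prime hp, Nat.primeFactorsList_prime hq]

lemma cast_ne_zero_of_gcd {p : ℕ} (hp : p.Prime) {a b : ℤ} (hd : (p : ℤ) ∣ b)
    (ha : Int.gcd a b = 1) : (a : ZMod p) ≠ 0 := by
  intro h
  rw [ZMod.intCast_zmod_eq_zero_iff_dvd] at h
  have hc : IsCoprime a b := Int.isCoprime_iff_gcd_eq_one.mpr ha
  have hu : IsUnit (p : ℤ) := hc.isUnit_of_dvd' h hd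
  rcases Int.isUnit_iff.mp hu with h1 | h1 <;>
  · have h2 := hp.two_le
    omega

theorem statement14 (p q k : ℕ) (hp : p.Prime) (hq : q.Prime)
    (hpo : Odd p) (hqo : Odd q) (hpq : p ≠ q)
    (hkp : padicValNat 2 (p - 1) = k) (hkq : padicValNat 2 (q - 1) = k)
    (a : ℤ) (ha : Int.gcd a ((p : ℤ) * q) = 1) :
    ∀ i : ℕ, 1 ≤ i →
      (i ≤ k → rpsN i (p * q) (a ^ 2 ^ (i - 1)) = rpsN 1 (p * q) a) ∧
      (k < i → rpsN i (p * q) (a ^ 2 ^ (i - 1)) = 1) := by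
  have hap : (a : ZMod p) ≠ 0 := cast_ne_zero_of_gcd hp (Dvd.intro _ rfl) ha
  have haq : (a : ZMod q) ≠ 0 := cast_ne_zero_of_gcd hq (Dvd.intro_left _ rfl) ha
  intro i hi
  have Kp := key p hp hpo (a : ZMod p) hap i k hi hkp
  have Kq := key q hq hqo (a : ZMod q) haq i k hi hkq
  constructor
  · intro hik
    have h1 : (∃ x : ZMod p, x ^ 2 ^ i = ((a ^ 2 ^ (i - 1) : ℤ) : ZMod p)) ↔
        ∃ x : ZMod p, x ^ 2 ^ 1 = (a : ZMod p) := by push_cast; exact Kp.1 hik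
    have h2 : (∃ x : ZMod q, x ^ 2 ^ i = ((a ^ 2 ^ (i - 1) : ℤ) : ZMod q)) ↔
        ∃ x : ZMod q, x ^ 2 ^ 1 = (a : ZMod q) := by push_cast; exact Kq.1 hik
    rw [rpsN_two _ _ _ hp hq, rpsN_two _ _ _ hp hq,
      rps_eq_of_iff h1, rps_eq_of_iff h2]
  · intro hki
    have h1 : ∃ x : ZMod p, x ^ 2 ^ i = ((a ^ 2 ^ (i - 1) : ℤ) : ZMod p) := by
      push_cast; exact Kp.2 hki
    have h2 : ∃ x : ZMod q, x ^ 2 ^ i = ((a ^ 2 ^ (i - 1) : ℤ) : ZMod q) := by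
      push_cast; exact Kq.2 hki
    rw [rpsN_two _ _ _ hp hq, rps_eq_one h1, rps_eq_one h2]
    norm_num
end

section
/- Let N = pq with p, q distinct primes and N ≡ 3 (mod 4). Let a ∈ ℤ with gcd(a, N) = 1 and (a|N)_2 = 1. Then multiplication by a² permutes the set Z*_{N,2}, and a is a quadratic residue modulo N (i.e. there exists x ∈ ℤ with x² ≡ a (mod N)) if and only if the sign of the permutation of Z*_{N,2} given by x ↦ a²x (mod N) equals 1. -/
open Equiv Subgroup

section SignLemma
variable {G : Type*} [CommGroup G] [Fintype G] [DecidableEq G]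

private lemma mulLeft_pow_apply (c : G) (n : ℕ) (x : G) :
    ((Equiv.mulLeft c) ^ n) x = c ^ n * x := by
  induction n with
  | zero => simp
  | succ k ih =>
    rw [pow_succ', pow_succ', Equiv.Perm.mul_apply, ih, Equiv.coe_mulLeft, mul_assoc]

private lemma mulLeft_zpow_apply (c : G) (n : ℤ) (x : G) :
    ((Equiv.mulLeft c) ^ n) x = c ^ n * x := by
  cases n with
  | ofNat k => simpa using mulLeft_pow_apply c k x
  | negSucc k =>
    rw [zpow_negSucc]
    apply ((Equiv.mulLeft c ^ (k+1)).injective)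
    rw [← Equiv.Perm.mul_apply, mul_inv_cancel, Equiv.Perm.one_apply, mulLeft_pow_apply, ← mul_assoc]
    have : c ^ ((k:ℤ)+1) * c ^ (Int.negSucc k) = 1 := by
      rw [← zpow_add, show ((k:ℤ)+1+Int.negSucc k) = 0 by rw [Int.negSucc_eq]; ring, zpow_zero]
    rw [show ((c:G) ^ (k+1) : G) = c ^ ((k:ℤ)+1) by rw [← zpow_natCast]; push_cast; ring_nf, this, one_mul]

lemma sign_mulLeft_cyclic (c : G) (hgen : ∀ x : G, x ∈ zpowers c) :
    Equiv.Perm.sign (Equiv.mulLeft c) = -(-1 : ℤˣ) ^ (orderOf c) := by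
  rcases eq_or_ne c 1 with rfl | hc
  · simp [Equiv.Perm.one_def]
  · have hcyc : (Equiv.mulLeft c).IsCycle := by
      refine ⟨1, by simpa using hc, fun y _ => ?_⟩
      obtain ⟨n, hn⟩ := mem_zpowers_iff.mp (hgen y)
      exact ⟨n, by simpa [mulLeft_zpow_apply] using hn⟩
    have hsupp : (Equiv.mulLeft c).support = Finset.univ := by
      ext y
      simp only [Equiv.Perm.mem_support, Finset.mem_univ, iff_true]
      intro h
      exact hc (by simpa using mul_right_cancel (h.trans (one_mul y).symm))
    have := hcyc.sign
    rw [hsupp] at this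
    rw [this]
    congr 1
    rw [Finset.card_univ]
    rw [← Nat.card_eq_fintype_card, orderOf_eq_card_of_forall_mem_zpowers hgen]
end SignLemma

section SignLemma2
variable {G : Type*} [CommGroup G] [Fintype G] [DecidableEq G]

lemma sign_mulLeft_comm (g : G) :
    Equiv.Perm.sign (Equiv.mulLeft g) =
      (-(-1 : ℤˣ) ^ orderOf g) ^ (Fintype.card G / orderOf g) := by
  classical
  set H := Subgroup.zpowers g with hH
  have hmem : ∀ x : G, (Quotient.out (QuotientGroup.mk x : G ⧸ H))⁻¹ * x ∈ H := by
    intro x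
    rw [← QuotientGroup.eq]
    exact QuotientGroup.out_eq' _
  haveI : Fintype (G ⧸ H) := Fintype.ofFinite _
  let e : G ≃ (G ⧸ H) × H :=
    { toFun := fun x => (QuotientGroup.mk x, ⟨_, hmem x⟩)
      invFun := fun z => Quotient.out z.1 * (z.2 : G)
      left_inv := fun x => by simp
      right_inv := fun z => by
        have h1 : (QuotientGroup.mk (Quotient.out z.1 * (z.2 : G)) : G ⧸ H) = z.1 := by
          rw [QuotientGroup.mk_mul_of_mem _ z.2.2, QuotientGroup.out_eq']
        refine Prod.ext h1 (Subtype.ext ?_)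
        simp only [h1]
        group }
  set c : H := ⟨g, Subgroup.mem_zpowers g⟩ with hc
  have key : ∀ x, e (Equiv.mulLeft g x) =
      (Equiv.prodCongrRight fun _ => Equiv.mulLeft c) (e x) := by
    intro x
    have h1 : ((g * x : G) : G ⧸ H) = (x : G ⧸ H) := by
      rw [QuotientGroup.eq, mul_comm g x, mul_inv_rev, mul_assoc, inv_mul_cancel, mul_one]
      exact H.inv_mem (Subgroup.mem_zpowers g)
    have h2 : (Quotient.out ((g * x : G) : G ⧸ H))⁻¹ * (g * x)
        = g * ((Quotient.out ((x : G) : G ⧸ H))⁻¹ * x) := by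
      rw [h1, mul_left_comm]
    exact Prod.ext h1 (Subtype.ext h2)
  rw [Equiv.Perm.sign_eq_sign_of_equiv _ _ e key, Equiv.Perm.sign_prodCongrRight]
  rw [Finset.prod_const, Finset.card_univ]
  have hgenc : ∀ y : H, y ∈ Subgroup.zpowers c := by
    intro y
    obtain ⟨n, hn⟩ := Subgroup.mem_zpowers_iff.mp y.2
    exact Subgroup.mem_zpowers_iff.mpr ⟨n, Subtype.ext (by
      rw [← hn]; push_cast; rfl)⟩
  have hoc : orderOf c = orderOf g := by
    have := orderOf_injective H.subtype Subtype.coe_injective c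
    exact this.symm
  rw [sign_mulLeft_cyclic c hgenc, hoc]
  congr 1
  have h3 : Nat.card (G ⧸ H) * orderOf g = Nat.card G := by
    rw [← Nat.card_zpowers g]
    exact (Subgroup.card_eq_card_quotient_mul_card_subgroup H).symm
  rw [← Nat.card_eq_fintype_card, ← Nat.card_eq_fintype_card (α := G), ← h3,
    Nat.mul_div_cancel _ (orderOf_pos g)]
end SignLemma2

section Helpers
variable {G : Type*} [CommGroup G] [Fintype G] [DecidableEq G]

lemma sign_mulLeft_mul_self (h : G) :
    Equiv.Perm.sign (Equiv.mulLeft (h * h)) = 1 := by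
  have : Equiv.mulLeft (h * h) = Equiv.mulLeft h * Equiv.mulLeft h := by
    ext x; simp [mul_assoc]
  rw [this, map_mul, ← pow_two, Int.units_sq]

lemma sign_mulLeft_of_odd_card (h : G) (hodd : Odd (Fintype.card G)) :
    Equiv.Perm.sign (Equiv.mulLeft h) = 1 := by
  rw [sign_mulLeft_comm]
  have hodd' : Odd (orderOf h) := hodd.of_dvd_nat orderOf_dvd_card
  rw [hodd'.neg_one_pow, neg_neg, one_pow]

lemma range_sq_eq_zpowers {g : G} (hg : ∀ x : G, x ∈ Subgroup.zpowers g) :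
    (powMonoidHom 2 : G →* G).range = Subgroup.zpowers (g ^ 2) := by
  ext x
  constructor
  · rintro ⟨y, rfl⟩
    obtain ⟨n, hn⟩ := Subgroup.mem_zpowers_iff.mp (hg y)
    refine Subgroup.mem_zpowers_iff.mpr ⟨n, ?_⟩
    rw [← hn]
    show (g ^ 2) ^ n = (g ^ n) ^ 2
    group
  · rintro ⟨n, rfl⟩
    refine ⟨g ^ n, ?_⟩
    show (g ^ n) ^ 2 = (g ^ 2) ^ n
    group

lemma card_range_sq [IsCyclic G] (h2 : 2 ∣ Fintype.card G) :
    Nat.card ((powMonoidHom 2 : G →* G).range) = Fintype.card G / 2 := by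
  obtain ⟨g, hg⟩ := IsCyclic.exists_generator (α := G)
  rw [range_sq_eq_zpowers hg, Nat.card_zpowers, orderOf_pow' g two_ne_zero,
    orderOf_eq_card_of_forall_mem_zpowers hg, Nat.card_eq_fintype_card,
    Nat.gcd_eq_right h2]
end Helpers

section ZModHelpers

lemma lift_unit_sq {n : ℕ} [NeZero n] {w : (ZMod n)ˣ} {y : ZMod n} (h : y * y = (w : ZMod n)) :
    ∃ v : (ZMod n)ˣ, v * v = w := by
  have hu : IsUnit y := isUnit_of_mul_isUnit_left (h ▸ w.isUnit)
  exact ⟨hu.unit, Units.ext (by rw [Units.val_mul, hu.unit_spec, h])⟩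

lemma exists_int_sq_iff (n : ℕ) [NeZero n] (w : (ZMod n)ˣ) :
    (∃ x : ℤ, (x : ZMod n) ^ 2 = (w : ZMod n)) ↔ ∃ v : (ZMod n)ˣ, v ^ 2 = w := by
  constructor
  · rintro ⟨x, hx⟩
    rw [pow_two] at hx
    obtain ⟨v, hv⟩ := lift_unit_sq hx
    exact ⟨v, by rw [pow_two, hv]⟩
  · rintro ⟨v, hv⟩
    refine ⟨(ZMod.cast (v : ZMod n) : ℤ), ?_⟩
    rw [ZMod.intCast_zmod_cast, ← Units.val_pow_eq_pow_val, hv]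

lemma modeq_sq_iff (n : ℕ) [NeZero n] (a : ℤ) (v : (ZMod n)ˣ) (hv : (v : ZMod n) = (a : ZMod n)) :
    (∃ x : ℤ, x ^ 2 ≡ a [ZMOD (n : ℤ)]) ↔ IsSquare v := by
  have key : ∀ x : ℤ, (x ^ 2 ≡ a [ZMOD (n : ℤ)]) ↔ (x : ZMod n) ^ 2 = (v : ZMod n) := by
    intro x
    rw [← ZMod.intCast_eq_intCast_iff, hv]
    push_cast
    rfl
  simp only [key]
  rw [exists_int_sq_iff]
  constructor
  · rintro ⟨w, hw⟩; exact ⟨w, by rw [← hw, pow_two]⟩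
  · rintro ⟨w, hw⟩; exact ⟨w, by rw [pow_two, ← hw]⟩

lemma isSquare_prod_iff {M N : Type*} [Monoid M] [Monoid N] (z : M × N) :
    IsSquare z ↔ IsSquare z.1 ∧ IsSquare z.2 := by
  constructor
  · rintro ⟨r, rfl⟩; exact ⟨⟨r.1, rfl⟩, ⟨r.2, rfl⟩⟩
  · rintro ⟨⟨r, hr⟩, ⟨s, hs⟩⟩
    exact ⟨(r, s), Prod.ext hr hs⟩

lemma mulEquiv_isSquare_iff {M N : Type*} [Monoid M] [Monoid N] (f : M ≃* N) (x : M) :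
    IsSquare (f x) ↔ IsSquare x := by
  constructor
  · rintro ⟨r, hr⟩
    exact ⟨f.symm r, by
      have := congrArg f.symm hr
      simpa using this⟩
  · exact fun h => h.map f.toMonoidHom

end ZModHelpers

theorem statement18aux (p q N : ℕ) (hp : p.Prime) (hq : q.Prime) [NeZero p] [NeZero q]
    [NeZero N] (hpq : p ≠ q) (hNeq : N = p * q) (hp4 : p % 4 = 1) (hq4 : q % 4 = 3)
    (a : ℤ) (ha : Int.gcd a (N : ℤ) = 1)
    (hjac : rpsN 1 N a = 1) :
    ∃ σ : Equiv.Perm (QRunits N 1),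
      (∀ x : QRunits N 1,
        ((σ x : (ZMod N)ˣ) : ZMod N) =
          (a : ZMod N) ^ 2 * ((x : (ZMod N)ˣ) : ZMod N)) ∧
      ((∃ x : ℤ, x ^ 2 ≡ a [ZMOD ((N : ℕ) : ℤ)]) ↔ (Equiv.Perm.sign σ : ℤ) = 1) := by
  classical
  subst hNeq
  haveI hpf : Fact p.Prime := ⟨hp⟩
  haveI hqf : Fact q.Prime := ⟨hq⟩
  have hp2 : p ≠ 2 := by rintro rfl; omega
  have hq2 : q ≠ 2 := by rintro rfl; omega
  have hppos : 5 ≤ p := by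
    rcases hp.eq_one_or_self_of_dvd 1 (one_dvd p) with h | h <;>
    · have := hp.two_le; omega
  have hqpos : 3 ≤ q := by have := hq.two_le; omega
  have hco : Nat.Coprime p q := (Nat.coprime_primes hp hq).mpr hpq
  have hNZ : (((p * q : ℕ) : ℤ)) = (p : ℤ) * q := by push_cast; ring
  -- the unit `u` with value `a`
  have hunit : IsUnit ((a : ℤ) : ZMod (p * q)) := by
    have h1 : IsCoprime (a : ℤ) (((p * q : ℕ) : ℤ)) := by
      rw [Int.isCoprime_iff_gcd_eq_one]; exact ha
    have h2 := h1.map (Int.castRingHom (ZMod (p * q)))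
    simp only [map_intCast, map_natCast, ZMod.natCast_self] at h2
    exact isCoprime_zero_right.mp h2
  set u : (ZMod (p * q))ˣ := hunit.unit with hudef
  have hu : (u : ZMod (p * q)) = (a : ZMod (p * q)) := hunit.unit_spec
  set χ : ZMod (p * q) ≃+* ZMod p × ZMod q := ZMod.chineseRemainder hco with hχdef
  set φ : (ZMod (p * q))ˣ ≃* (ZMod p)ˣ × (ZMod q)ˣ :=
    (Units.mapEquiv χ.toMulEquiv).trans MulEquiv.prodUnits with hφdef
  have hφval : ∀ w : (ZMod (p * q))ˣ,
      (((φ w).1 : ZMod p), ((φ w).2 : ZMod q)) = χ (w : ZMod (p * q)) := fun w => rfl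
  have hχa : χ ((a : ℤ) : ZMod (p * q)) = ((a : ZMod p), (a : ZMod q)) := by
    rw [map_intCast]; exact Prod.ext (by simp) (by simp)
  set up : (ZMod p)ˣ := (φ u).1 with hupdef
  set uq : (ZMod q)ˣ := (φ u).2 with huqdef
  have hupv : (up : ZMod p) = (a : ZMod p) := by
    have := congrArg Prod.fst (hφval u); rw [hu, hχa] at this; exact this
  have huqv : (uq : ZMod q) = (a : ZMod q) := by
    have := congrArg Prod.snd (hφval u); rw [hu, hχa] at this; exact this
  -- translations
  have HQp : (∃ x : ℤ, x ^ 2 ≡ a [ZMOD (p : ℤ)]) ↔ IsSquare up := modeq_sq_iff p a up hupv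
  have HQq : (∃ x : ℤ, x ^ 2 ≡ a [ZMOD (q : ℤ)]) ↔ IsSquare uq := modeq_sq_iff q a uq huqv
  have HN : (∃ x : ℤ, x ^ 2 ≡ a [ZMOD ((p * q : ℕ) : ℤ)]) ↔ (IsSquare up ∧ IsSquare uq) := by
    rw [modeq_sq_iff (p * q) a u hu, ← mulEquiv_isSquare_iff φ u, isSquare_prod_iff]
  -- Jacobi symbol
  have hjac' : rps 1 p a * rps 1 q a = 1 := by
    have hperm := (Nat.perm_primeFactorsList_mul hp.pos.ne' hq.pos.ne').map
      (fun r => rps 1 r a)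
    rw [rpsN, hperm.prod_eq, Nat.primeFactorsList_prime hp, Nat.primeFactorsList_prime hq]
      at hjac
    simpa using hjac
  have hrps : ∀ r : ℕ, rps 1 r a = if (∃ x : ℤ, x ^ 2 ≡ a [ZMOD (r : ℤ)]) then 1 else -1 := by
    intro r; rw [rps]; norm_num
  have Hiff : IsSquare up ↔ IsSquare uq := by
    rw [← HQp, ← HQq]
    rw [hrps p, hrps q] at hjac'
    by_cases h1 : (∃ x : ℤ, x ^ 2 ≡ a [ZMOD (p : ℤ)]) <;>
      by_cases h2 : (∃ x : ℤ, x ^ 2 ≡ a [ZMOD (q : ℤ)]) <;>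
      simp [h1, h2] at hjac' ⊢
  -- the subgroups of squares
  set Hp : Subgroup (ZMod p)ˣ := (powMonoidHom 2 : (ZMod p)ˣ →* (ZMod p)ˣ).range with hHpdef
  set Hq : Subgroup (ZMod q)ˣ := (powMonoidHom 2 : (ZMod q)ˣ →* (ZMod q)ˣ).range with hHqdef
  have memQR : ∀ r : (ZMod (p * q))ˣ, r ∈ QRunits (p * q) 1 ↔ ∃ v : (ZMod (p * q))ˣ, v ^ 2 = r := by
    intro r
    rw [QRunits, Finset.mem_filter]
    simp only [Finset.mem_univ, true_and]
    rw [show (2 : ℕ) ^ 1 = 2 from rfl]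
    exact exists_int_sq_iff (p * q) r
  have etoMem : ∀ r : {x // x ∈ QRunits (p * q) 1}, (φ r.1).1 ∈ Hp ∧ (φ r.1).2 ∈ Hq := by
    intro r
    obtain ⟨v, hv⟩ := (memQR r.1).mp r.2
    constructor
    · exact ⟨(φ v).1, by show (φ v).1 ^ 2 = (φ r.1).1; rw [← hv, map_pow, Prod.pow_fst]⟩
    · exact ⟨(φ v).2, by show (φ v).2 ^ 2 = (φ r.1).2; rw [← hv, map_pow, Prod.pow_snd]⟩
  have invMem : ∀ z : ↥Hp × ↥Hq, φ.symm ((z.1 : (ZMod p)ˣ), (z.2 : (ZMod q)ˣ)) ∈ QRunits (p * q) 1 := by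
    intro z
    rw [memQR]
    obtain ⟨s, hs⟩ := z.1.2
    obtain ⟨t, ht⟩ := z.2.2
    refine ⟨φ.symm (s, t), ?_⟩
    rw [← map_pow]
    congr 1
    exact Prod.ext hs ht
  set e : {x // x ∈ QRunits (p * q) 1} ≃ ↥Hp × ↥Hq :=
    { toFun := fun r => (⟨(φ r.1).1, (etoMem r).1⟩, ⟨(φ r.1).2, (etoMem r).2⟩)
      invFun := fun z => ⟨φ.symm ((z.1 : (ZMod p)ˣ), (z.2 : (ZMod q)ˣ)), invMem z⟩
      left_inv := fun r => Subtype.ext (by simp)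
      right_inv := fun z => by
        refine Prod.ext (Subtype.ext ?_) (Subtype.ext ?_) <;> simp } with hedef
  set xp : ↥Hp := ⟨up ^ 2, ⟨up, rfl⟩⟩ with hxpdef
  set yq : ↥Hq := ⟨uq ^ 2, ⟨uq, rfl⟩⟩ with hyqdef
  set τ : Equiv.Perm (↥Hp × ↥Hq) := (Equiv.mulLeft xp).prodCongr (Equiv.mulLeft yq) with hτdef
  refine ⟨e.symm.permCongr τ, ?_, ?_⟩
  · -- the permutation property
    intro x
    have h6 : ((e.symm.permCongr τ) x : (ZMod (p * q))ˣ)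
        = φ.symm (((up ^ 2) * (φ x.1).1), ((uq ^ 2) * (φ x.1).2)) := rfl
    have h7 : φ.symm (((up ^ 2) * (φ x.1).1), ((uq ^ 2) * (φ x.1).2)) = u ^ 2 * x.1 := by
      apply φ.injective
      rw [MulEquiv.apply_symm_apply, map_mul, map_pow]
      rfl
    rw [h6, h7, Units.val_mul, Units.val_pow_eq_pow_val, hu]
  · -- the sign computation
    have hcup : Fintype.card (ZMod p)ˣ = p - 1 := by
      rw [ZMod.card_units_eq_totient, Nat.totient_prime hp]
    have hcuq : Fintype.card (ZMod q)ˣ = q - 1 := by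
      rw [ZMod.card_units_eq_totient, Nat.totient_prime hq]
    have hsign : Equiv.Perm.sign (e.symm.permCongr τ) = Equiv.Perm.sign τ :=
      Equiv.Perm.sign_permCongr e.symm τ
    have hτdecomp : τ = (Equiv.prodCongrLeft fun _ : ↥Hq => Equiv.mulLeft xp)
        * (Equiv.prodCongrRight fun _ : ↥Hp => Equiv.mulLeft yq) := by
      apply Equiv.ext; rintro ⟨z1, z2⟩; rfl
    have hcardHp : Nat.card ↥Hp = (p - 1) / 2 := by
      rw [hHpdef, card_range_sq (by rw [hcup]; omega), hcup]
    have hcardHq : Nat.card ↥Hq = (q - 1) / 2 := by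
      rw [hHqdef, card_range_sq (by rw [hcuq]; omega), hcuq]
    have hoddq : Odd (Fintype.card ↥Hq) := by
      rw [← Nat.card_eq_fintype_card, hcardHq, Nat.odd_iff]; omega
    have hyq1 : Equiv.Perm.sign (Equiv.mulLeft yq) = 1 := sign_mulLeft_of_odd_card yq hoddq
    have hsτ : Equiv.Perm.sign τ = Equiv.Perm.sign (Equiv.mulLeft xp) := by
      rw [hτdecomp, map_mul, Equiv.Perm.sign_prodCongrLeft, Equiv.Perm.sign_prodCongrRight]
      simp only [hyq1, Finset.prod_const, Finset.card_univ, mul_one]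
      rcases Int.units_eq_one_or (Equiv.Perm.sign (Equiv.mulLeft xp)) with h | h <;>
        rw [h] <;> simp [hoddq.neg_one_pow]
    have hxpsign : Equiv.Perm.sign (Equiv.mulLeft xp) = if IsSquare up then 1 else -1 := by
      by_cases hsq : IsSquare up
      · rw [if_pos hsq]
        obtain ⟨s, hs⟩ := hsq
        have hmem : up ∈ Hp := ⟨s, (sq s).trans hs.symm⟩
        have hxp2 : xp = (⟨up, hmem⟩ : ↥Hp) * ⟨up, hmem⟩ := by
          apply Subtype.ext; exact sq up
        rw [hxp2]; exact sign_mulLeft_mul_self _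
      · rw [if_neg hsq]
        set t := orderOf up with htdef
        have htpos : 0 < t := orderOf_pos up
        have htn : t ∣ p - 1 := by rw [← hcup]; exact orderOf_dvd_card
        have hEuler : ¬ up ^ ((p - 1) / 2) = 1 := by
          intro h
          apply hsq
          have hp2' : p / 2 = (p - 1) / 2 := by omega
          obtain ⟨y, hy⟩ := (ZMod.euler_criterion_units p up).mpr (by rw [hp2']; exact h)
          exact ⟨y, by rw [← hy, sq]⟩
        set k := (p - 1) / t with hkdef
        have hktn : t * k = p - 1 := Nat.mul_div_cancel' htn
        have hkodd : Odd k := by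
          rw [Nat.odd_iff]
          by_contra h
          have hk2 : 2 ∣ k := by omega
          obtain ⟨k', hk'⟩ := hk2
          apply hEuler
          apply orderOf_dvd_iff_pow_eq_one.mp
          have h2 : 2 * (t * k') = p - 1 := by rw [← hktn, hk']; ring
          exact ⟨k', by rw [← htdef]; omega⟩
        have hteven : 2 ∣ t := by
          by_contra h
          have hodd : Odd (t * k) := (Nat.odd_iff.mpr (by omega)).mul hkodd
          rw [hktn, Nat.odd_iff] at hodd; omega
        have ht4 : 4 ∣ t := by
          have h4n : 4 ∣ p - 1 := by omega
          have hcop : Nat.Coprime 4 k := by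
            have h2k : Nat.Coprime 2 k := Nat.coprime_two_left.mpr hkodd
            exact Nat.Coprime.pow_left 2 h2k
          exact hcop.dvd_of_dvd_mul_right (by rw [hktn]; exact h4n)
        have hoxp : orderOf xp = t / 2 := by
          have h1 : orderOf xp = orderOf (up ^ 2) := by
            have := orderOf_injective Hp.subtype Subtype.coe_injective xp
            exact this.symm
          rw [h1, orderOf_pow' up two_ne_zero, ← htdef, Nat.gcd_eq_right hteven]
        have hcardxp : Fintype.card ↥Hp / orderOf xp = k := by
          rw [hoxp, ← Nat.card_eq_fintype_card, hcardHp]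
          obtain ⟨t', ht'⟩ := hteven
          have h2 : (p - 1) / 2 = t' * k := by
            have h3 : 2 * (t' * k) = p - 1 := by rw [← hktn, ht']; ring
            omega
          have ht'pos : 0 < t' := by omega
          rw [h2, ht', show 2 * t' / 2 = t' by omega, Nat.mul_div_cancel_left k ht'pos]
        have hdp_even : Even (orderOf xp) := by
          rw [hoxp]; obtain ⟨t'', ht''⟩ := ht4; exact ⟨t'', by omega⟩
        rw [sign_mulLeft_comm xp, hcardxp, hdp_even.neg_one_pow]
        exact hkodd.neg_one_pow
    rw [HN]
    have hfinal : (Equiv.Perm.sign (e.symm.permCongr τ)) = if IsSquare up then 1 else -1 := by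
      rw [hsign, hsτ, hxpsign]
    rw [hfinal]
    by_cases hsq : IsSquare up
    · rw [if_pos hsq]
      simp [hsq, Hiff.mp hsq]
    · rw [if_neg hsq]
      constructor
      · rintro ⟨h, -⟩; exact absurd h hsq
      · intro h; norm_num at h

theorem statement18 (p q : ℕ) (hp : p.Prime) (hq : q.Prime) [NeZero p] [NeZero q]
    (hpq : p ≠ q) (hN : p * q ≡ 3 [MOD 4])
    (a : ℤ) (ha : Int.gcd a ((p : ℤ) * q) = 1)
    (hjac : rpsN 1 (p * q) a = 1) :
    ∃ σ : Equiv.Perm (QRunits (p * q) 1),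
      (∀ x : QRunits (p * q) 1,
        ((σ x : (ZMod (p * q))ˣ) : ZMod (p * q)) =
          (a : ZMod (p * q)) ^ 2 * ((x : (ZMod (p * q))ˣ) : ZMod (p * q))) ∧
      ((∃ x : ℤ, x ^ 2 ≡ a [ZMOD ((p : ℤ) * q)]) ↔ (Equiv.Perm.sign σ : ℤ) = 1) := by
  have h2 : p * q % 4 = 3 := hN
  have h3 : p % 4 * (q % 4) % 4 = 3 := by rw [← Nat.mul_mod]; exact h2
  have hmod : p % 4 = 1 ∧ q % 4 = 3 ∨ p % 4 = 3 ∧ q % 4 = 1 := by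
    have hp' : p % 4 = 0 ∨ p % 4 = 1 ∨ p % 4 = 2 ∨ p % 4 = 3 := by omega
    have hq' : q % 4 = 0 ∨ q % 4 = 1 ∨ q % 4 = 2 ∨ q % 4 = 3 := by omega
    rcases hp' with h | h | h | h <;> rcases hq' with h' | h' | h' | h' <;>
      rw [h, h'] at h3 <;> norm_num at h3 <;> tauto
  have hcast : (((p * q : ℕ)) : ℤ) = (p : ℤ) * q := by push_cast; ring
  have ha' : Int.gcd a ((p * q : ℕ) : ℤ) = 1 := by rw [hcast]; exact ha
  rcases hmod with ⟨h1, h2'⟩ | ⟨h1, h2'⟩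
  · obtain ⟨σ, hσ1, hσ2⟩ := statement18aux p q (p * q) hp hq hpq rfl h1 h2' a ha' hjac
    exact ⟨σ, hσ1, by rwa [hcast] at hσ2⟩
  · obtain ⟨σ, hσ1, hσ2⟩ :=
      statement18aux q p (p * q) hq hp hpq.symm (mul_comm p q) h2' h1 a ha' hjac
    exact ⟨σ, hσ1, by rwa [hcast] at hσ2⟩
end
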